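/- arXiv:1003.0356 — 6 statements merged into one kernel-verified Lean document; each statement's English description precedes it below -/
import Mathlib

section
/- Let $0<\alpha\le 1/2$ and let $f(\tau)=\sqrt{1-\alpha+\alpha\cos\tau}$. If additionally $\alpha\ge 2\delta^2$ for some $0<\delta\le 1/2$, then for all $\tau\in[-\pi/3,\pi/3]$ one has $\frac{d^2}{d\tau^2}\ln f(\tau) \le -\delta^2/2$. -/
open Real

/-- for `f(τ) = √(1-α+α cos τ)` with `2δ² ≤ α ≤ 1/2`,
`0 < δ ≤ 1/2`, one has `(ln f)''(τ) ≤ -δ²/2` on `[-π/3, π/3]`. -/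
theorem stmt4 (α δ : ℝ) (hα0 : 0 < α) (hα1 : α ≤ 1/2) (hδ0 : 0 < δ) (hδ1 : δ ≤ 1/2)
    (hαδ : 2 * δ^2 ≤ α) :
    ∀ τ ∈ Set.Icc (-(π/3)) (π/3),
      deriv (deriv (fun s : ℝ => Real.log (Real.sqrt (1 - α + α * Real.cos s)))) τ
        ≤ -(δ^2) / 2 := by
  intro τ hτ
  have hπ : τ ∈ Set.Ioo (-(π/2)) (π/2) := by
    constructor
    · have := hτ.1; nlinarith [pi_pos]
    · have := hτ.2; nlinarith [pi_pos]
  have hge : ∀ s : ℝ, (0:ℝ) ≤ 1 - α + α * Real.cos s := by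
    intro s
    nlinarith [Real.neg_one_le_cos s]
  have hfun : (fun s : ℝ => Real.log (Real.sqrt (1 - α + α * Real.cos s)))
      = fun s => Real.log (1 - α + α * Real.cos s) / 2 := by
    funext s
    rw [Real.log_sqrt (hge s)]
  rw [hfun]
  set g : ℝ → ℝ := fun s => 1 - α + α * Real.cos s with hg
  have hgpos : ∀ s ∈ Set.Ioo (-(π/2)) (π/2), 0 < g s := by
    intro s hs
    have hc : 0 < Real.cos s := Real.cos_pos_of_mem_Ioo (by simpa using hs)
    simp only [hg]
    nlinarith
  have hD : ∀ s ∈ Set.Ioo (-(π/2)) (π/2),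
      HasDerivAt (fun s => Real.log (g s) / 2) (-(α * Real.sin s) / g s / 2) s := by
    intro s hs
    have hg' : HasDerivAt g (-(α * Real.sin s)) s := by
      have h1 := ((Real.hasDerivAt_cos s).const_mul α).const_add (1 - α)
      simpa [hg, mul_comm] using h1
    exact (hg'.log (ne_of_gt (hgpos s hs))).div_const 2
  have hEq : deriv (fun s => Real.log (g s) / 2)
      =ᶠ[nhds τ] fun s => -(α * Real.sin s) / g s / 2 := by
    filter_upwards [(isOpen_Ioo : IsOpen (Set.Ioo (-(π/2)) (π/2))).mem_nhds hπ] with s hs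
    exact (hD s hs).deriv
  rw [hEq.deriv_eq]
  have hgτ : 0 < g τ := hgpos τ hπ
  have hnum : HasDerivAt (fun s => -(α * Real.sin s)) (-(α * Real.cos τ)) τ := by
    exact ((Real.hasDerivAt_sin τ).const_mul α).neg
  have hden : HasDerivAt g (-(α * Real.sin τ)) τ := by
    have h1 := ((Real.hasDerivAt_cos τ).const_mul α).const_add (1 - α)
    simpa [hg, mul_comm] using h1
  have h2 : HasDerivAt (fun s => -(α * Real.sin s) / g s / 2)
      (((-(α * Real.cos τ)) * g τ - (-(α * Real.sin τ)) * (-(α * Real.sin τ))) / (g τ)^2 / 2) τ :=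
    (hnum.div hden (ne_of_gt hgτ)).div_const 2
  rw [h2.deriv]
  -- inequality
  have hc1 : Real.cos τ ≤ 1 := Real.cos_le_one τ
  have hc2 : (1:ℝ)/2 ≤ Real.cos τ := by
    have habs : |τ| ≤ π/3 := abs_le.mpr ⟨by linarith [hτ.1], hτ.2⟩
    have := Real.cos_le_cos_of_nonneg_of_le_pi (abs_nonneg τ)
      (by nlinarith [pi_pos] : π/3 ≤ π) habs
    rw [Real.cos_pi_div_three, Real.cos_abs] at this
    exact this
  have hsin : Real.sin τ ^ 2 = 1 - Real.cos τ ^ 2 := Real.sin_sq τ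
  have hg1 : g τ ≤ 1 := by simp only [hg]; nlinarith
  have hgτ' : g τ = 1 - α + α * Real.cos τ := rfl
  have key : ((-(α * Real.cos τ)) * g τ - (-(α * Real.sin τ)) * (-(α * Real.sin τ))) / (g τ)^2
      ≤ -(δ^2) := by
    rw [div_le_iff₀ (by positivity)]
    rw [hgτ']
    have hsq : (1 - α + α * Real.cos τ)^2 ≤ 1 := by
      rw [hgτ'] at hgτ hg1; nlinarith
    have h3 : δ^2 * (1 - α + α * Real.cos τ)^2 ≤ δ^2 := by nlinarith [sq_nonneg δ]
    have h4 : (1:ℝ)/2 ≤ α + (1 - α) * Real.cos τ := by nlinarith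
    have h5 : δ^2 ≤ α * (α + (1 - α) * Real.cos τ) := by nlinarith
    have hs2 : α^2 * Real.sin τ ^ 2 = α^2 * (1 - Real.cos τ ^ 2) := by rw [hsin]
    nlinarith [hs2, h3, h5]
  linarith [key]
end

section
/- Let $z=(\zeta_1,\dots,\zeta_p)$ with $0<\zeta_j<1$ maximize $H(x)=\sum_j(\xi_j\ln(1/\xi_j)+(1-\xi_j)\ln(1/(1-\xi_j)))$ over the polytope $P=\{x\in[0,1]^p:\ \sum_j\xi_j a_j=b\}$, and let $x_1,\dots,x_p$ be independent Bernoulli random variables with $\mathbb{P}(x_j=1)=\zeta_j$. Then for every point $y\in P\cap\{0,1\}^p$, $\mathbb{P}(X=y)=e^{-H(z)}$, where $X=(x_1,\dots,x_p)$. -/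
open Finset MeasureTheory ProbabilityTheory

/-- The entropy function `H(x) = ∑ⱼ (ξⱼ ln(1/ξⱼ) + (1-ξⱼ) ln(1/(1-ξⱼ)))`. -/
noncomputable def entH {p : ℕ} (x : Fin p → ℝ) : ℝ :=
  ∑ j, (x j * Real.log (1 / x j) + (1 - x j) * Real.log (1 / (1 - x j)))

/-- let `z ∈ P`, `0 < ζⱼ < 1`, satisfy the Lagrange (maximum
entropy) condition `ln((1-ζⱼ)/ζⱼ) = ⟨aⱼ, λ⟩`, and let `X = (x₁,…,x_p)` be a
vector of independent Bernoulli random variables with `P(xⱼ = 1) = ζⱼ`.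
Then for every 0-1 point `y` of `P` one has `P(X = y) = e^{-H(z)}`. -/
theorem stmt11 (p n : ℕ) (a : Fin p → Fin n → ℤ) (b : Fin n → ℤ)
    (z : Fin p → ℝ) (hz01 : ∀ j, 0 < z j ∧ z j < 1)
    (hzP : ∀ i, ∑ j, z j * (a j i : ℝ) = (b i : ℝ))
    (lam : Fin n → ℝ)
    (hlam : ∀ j, Real.log ((1 - z j) / z j) = ∑ i, (a j i : ℝ) * lam i)
    {Ω : Type*} [MeasureSpace Ω] [IsProbabilityMeasure (ℙ : Measure Ω)]
    (X : Fin p → Ω → ℝ) (hmeas : ∀ j, Measurable (X j))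
    (hind : iIndepFun X ℙ)
    (hber : ∀ j, (ℙ {ω | X j ω = 1} = ENNReal.ofReal (z j) ∧
                  ℙ {ω | X j ω = 0} = ENNReal.ofReal (1 - z j)))
    (y : Fin p → ℝ) (hy01 : ∀ j, y j = 0 ∨ y j = 1)
    (hyP : ∀ i, ∑ j, y j * (a j i : ℝ) = (b i : ℝ)) :
    ℙ {ω | (fun j => X j ω) = y} = ENNReal.ofReal (Real.exp (-(entH z))) := by
  -- rewrite hlam : log(1-z)-log z = ⟨a,λ⟩
  have hlam' : ∀ j, Real.log (1 - z j) - Real.log (z j) = ∑ i, (a j i : ℝ) * lam i := by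
    intro j
    rw [← Real.log_div (by linarith [(hz01 j).2]) (by linarith [(hz01 j).1])]
    exact hlam j
  -- the probability weight of coordinate j
  set w : Fin p → ℝ := fun j => if y j = 1 then z j else 1 - z j with hw
  have hwpos : ∀ j, 0 < w j := by
    intro j; by_cases h : y j = 1 <;> simp [hw, h] <;> linarith [(hz01 j).1, (hz01 j).2]
  -- key sum identity
  have key : ∀ (v : Fin p → ℝ), (∀ i, ∑ j, v j * (a j i : ℝ) = (b i : ℝ)) →
      ∑ j, (Real.log (1 - z j) - v j * (∑ i, (a j i : ℝ) * lam i))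
        = ∑ j, Real.log (1 - z j) - ∑ i, (b i : ℝ) * lam i := by
    intro v hv
    rw [Finset.sum_sub_distrib]
    congr 1
    calc ∑ j, v j * ∑ i, (a j i : ℝ) * lam i
        = ∑ i, (∑ j, v j * (a j i : ℝ)) * lam i := by
          simp_rw [Finset.mul_sum, Finset.sum_mul, mul_assoc]
          exact Finset.sum_comm
      _ = ∑ i, (b i : ℝ) * lam i := by
          congr 1; ext i; rw [hv i]
  -- sum of logs of weights
  have hlogw : ∑ j, Real.log (w j) = -(entH z) := by
    have h1 : ∑ j, Real.log (w j)
        = ∑ j, (Real.log (1 - z j) - y j * (∑ i, (a j i : ℝ) * lam i)) := by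
      congr 1; ext j
      rcases hy01 j with h | h
      · simp [hw, h]
      · rw [show w j = z j from by simp [hw, h], ← hlam' j, h]; ring
    have h2 : -(entH z)
        = ∑ j, (Real.log (1 - z j) - z j * (∑ i, (a j i : ℝ) * lam i)) := by
      rw [entH, ← Finset.sum_neg_distrib]
      congr 1; ext j
      rw [← hlam' j, one_div, one_div, Real.log_inv, Real.log_inv]
      ring
    rw [h1, h2, key y hyP, key z hzP]
  -- product of weights
  have hprod : ∏ j, w j = Real.exp (-(entH z)) := by
    rw [← hlogw, Real.exp_sum]
    congr 1; ext j
    rw [Real.exp_log (hwpos j)]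
  -- set equality
  have hset : {ω | (fun j => X j ω) = y} = ⋂ j, X j ⁻¹' {y j} := by
    ext ω; simp [funext_iff, Set.mem_iInter]
  rw [hset, hind.meas_iInter (fun j => ⟨{y j}, measurableSet_singleton _, rfl⟩)]
  have hpj : ∀ j, ℙ (X j ⁻¹' {y j}) = ENNReal.ofReal (w j) := by
    intro j
    rcases hy01 j with h | h
    · have := (hber j).2
      simp only [hw, h]
      simpa [Set.preimage, h] using this
    · have := (hber j).1
      simp only [hw, h]
      simpa [Set.preimage, h] using this
  calc ∏ j, ℙ (X j ⁻¹' {y j}) = ∏ j, ENNReal.ofReal (w j) := by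
        congr 1; ext j; exact hpj j
    _ = ENNReal.ofReal (∏ j, w j) := by
        rw [← ENNReal.ofReal_prod_of_nonneg (fun j _ => (hwpos j).le)]
    _ = ENNReal.ofReal (Real.exp (-(entH z))) := by rw [hprod]
end

section
/- Let $D=(d_1,\dots,d_n)$ be a sequence of positive rational numbers with $d_1\ge\cdots\ge d_n$ satisfying the Erdős–Gallai inequalities $\sum_{i=1}^k d_i \le k(k-1)+\sum_{i=k+1}^n\min\{k,d_i\}$ for all $k=1,\dots,n$. Then the polytope $\mathcal{P}(D)$ is non-empty, where $\mathcal{P}(D)$ consists of all vectors $(\xi_{\{j,k\}})_{1\le j<k\le n}$ with $0\le\xi_{\{j,k\}}\le 1$ and $\sum_{j\ne k}\xi_{\{j,k\}}=d_k$ for every $k$. -/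
open Finset

lemma aux_le_orderEmb {k n : ℕ} (e : Fin k ↪o Fin n) :
    ∀ m (hm : m < k), m ≤ (e ⟨m, hm⟩ : ℕ) := by
  intro m
  induction m with
  | zero => intro hm; exact Nat.zero_le _
  | succ p ih =>
    intro hm
    have hp : p < k := Nat.lt_of_succ_lt hm
    have h1 := ih hp
    have h2 : (e ⟨p, hp⟩ : ℕ) < (e ⟨p+1, hm⟩ : ℕ) := by
      have h3 : (⟨p, hp⟩ : Fin k) < ⟨p+1, hm⟩ := by simp [Fin.lt_def]
      exact e.strictMono h3
    omega

lemma aux_subset_sum_le {n : ℕ} (G : ℕ → ℝ)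
    (hG : ∀ i j : ℕ, i ≤ j → j < n → G j ≤ G i) (S : Finset (Fin n)) :
    ∑ i ∈ S, G (i : ℕ) ≤ ∑ m ∈ Finset.range S.card, G m := by
  classical
  set k := S.card with hk
  let e := S.orderEmbOfFin hk.symm
  have hS : S = Finset.univ.map e.toEmbedding := by
    ext a
    simp only [Finset.mem_map, Finset.mem_univ, true_and]
    constructor
    · intro ha
      have hr : a ∈ Set.range e := by
        rw [Finset.range_orderEmbOfFin]; exact ha
      obtain ⟨i, hi⟩ := hr; exact ⟨i, hi⟩
    · rintro ⟨i, rfl⟩; exact Finset.orderEmbOfFin_mem S hk.symm i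
  rw [hS, Finset.sum_map]
  have hle : ∀ i : Fin k, G ((e.toEmbedding i : Fin n) : ℕ) ≤ G (i : ℕ) := by
    intro i
    have h1 : (i : ℕ) ≤ ((e i : Fin n) : ℕ) := by
      have := aux_le_orderEmb e i i.isLt
      simpa using this
    exact hG (i : ℕ) ((e i : Fin n) : ℕ) h1 (e i).isLt
  calc ∑ i : Fin k, G ((e.toEmbedding i : Fin n) : ℕ)
      ≤ ∑ i : Fin k, G (i : ℕ) := Finset.sum_le_sum (fun i _ => hle i)
    _ = ∑ m ∈ Finset.range k, G m := Fin.sum_univ_eq_sum_range _ _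

lemma aux_pair (ε a b sa sb : ℝ) (hε : 0 < ε)
    (ha : a ≠ 0 → ε ≤ |a|) (hb : b ≠ 0 → ε ≤ |b|)
    (hsa : sa = if 0 < a then 1 else if a < 0 then -1 else 0)
    (hsb : sb = if 0 < b then 1 else if b < 0 then -1 else 0) :
    max (a + b) 0 = ε * max (sa + sb) 0 + max ((a - ε * sa) + (b - ε * sb)) 0 := by
  rcases lt_trichotomy a 0 with h1 | h1 | h1 <;>
    rcases lt_trichotomy b 0 with h2 | h2 | h2
  · -- a < 0, b < 0
    have Ha : ε ≤ -a := by have := ha (ne_of_lt h1); rwa [abs_of_neg h1] at this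
    have Hb : ε ≤ -b := by have := hb (ne_of_lt h2); rwa [abs_of_neg h2] at this
    rw [hsa, hsb, if_neg (by linarith), if_pos h1, if_neg (by linarith), if_pos h2]
    rw [max_eq_right (by linarith), max_eq_right (by norm_num), max_eq_right (by linarith)]
    ring
  · -- a < 0, b = 0
    have Ha : ε ≤ -a := by have := ha (ne_of_lt h1); rwa [abs_of_neg h1] at this
    rw [hsa, hsb, if_neg (by linarith), if_pos h1, if_neg (by simp [h2]), if_neg (by simp [h2])]
    rw [max_eq_right (by linarith), max_eq_right (by norm_num), max_eq_right (by linarith)]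
    ring
  · -- a < 0, 0 < b
    have Ha : ε ≤ -a := by have := ha (ne_of_lt h1); rwa [abs_of_neg h1] at this
    have Hb : ε ≤ b := by have := hb (ne_of_gt h2); rwa [abs_of_pos h2] at this
    rw [hsa, hsb, if_neg (by linarith), if_pos h1, if_pos h2]
    have : (a - ε * (-1)) + (b - ε * 1) = a + b := by ring
    rw [this]
    norm_num
  · -- a = 0, b < 0
    have Hb : ε ≤ -b := by have := hb (ne_of_lt h2); rwa [abs_of_neg h2] at this
    rw [hsa, hsb, if_neg (by simp [h1]), if_neg (by simp [h1]), if_neg (by linarith), if_pos h2]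
    rw [max_eq_right (by linarith), max_eq_right (by norm_num), max_eq_right (by linarith)]
    ring
  · -- a = 0, b = 0
    rw [hsa, hsb, if_neg (by simp [h1]), if_neg (by simp [h1]),
      if_neg (by simp [h2]), if_neg (by simp [h2])]
    simp [h1, h2]
  · -- a = 0, 0 < b
    have Hb : ε ≤ b := by have := hb (ne_of_gt h2); rwa [abs_of_pos h2] at this
    rw [hsa, hsb, if_neg (by simp [h1]), if_neg (by simp [h1]), if_pos h2]
    rw [max_eq_left (by linarith), max_eq_left (by norm_num), max_eq_left (by linarith)]
    ring
  · -- 0 < a, b < 0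
    have Ha : ε ≤ a := by have := ha (ne_of_gt h1); rwa [abs_of_pos h1] at this
    have Hb : ε ≤ -b := by have := hb (ne_of_lt h2); rwa [abs_of_neg h2] at this
    rw [hsa, hsb, if_pos h1, if_neg (by linarith), if_pos h2]
    have : (a - ε * 1) + (b - ε * (-1)) = a + b := by ring
    rw [this]
    norm_num
  · -- 0 < a, b = 0
    have Ha : ε ≤ a := by have := ha (ne_of_gt h1); rwa [abs_of_pos h1] at this
    rw [hsa, hsb, if_pos h1, if_neg (by simp [h2]), if_neg (by simp [h2])]
    rw [max_eq_left (by linarith), max_eq_left (by norm_num), max_eq_left (by linarith)]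
    ring
  · -- 0 < a, 0 < b
    have Ha : ε ≤ a := by have := ha (ne_of_gt h1); rwa [abs_of_pos h1] at this
    have Hb : ε ≤ b := by have := hb (ne_of_gt h2); rwa [abs_of_pos h2] at this
    rw [hsa, hsb, if_pos h1, if_pos h2]
    rw [max_eq_left (by linarith), max_eq_left (by norm_num), max_eq_left (by linarith)]
    ring

lemma aux_offdiag_comm {n : ℕ} (F : Fin n → Fin n → ℝ) :
    ∑ k, ∑ j ∈ univ.erase k, F j k = ∑ k, ∑ j ∈ univ.erase k, F k j := by
  have h1 : ∀ k : Fin n, ∑ j ∈ univ.erase k, F j k = (∑ j, F j k) - F k k := by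
    intro k; rw [eq_sub_iff_add_eq, Finset.sum_erase_add _ _ (mem_univ k)]
  have h2 : ∀ k : Fin n, ∑ j ∈ univ.erase k, F k j = (∑ j, F k j) - F k k := by
    intro k; rw [eq_sub_iff_add_eq, Finset.sum_erase_add _ _ (mem_univ k)]
  simp only [h1, h2, Finset.sum_sub_distrib]
  rw [Finset.sum_comm]



lemma aux_claimB {n : ℕ} (d : Fin n → ℝ)
    (hEG : ∀ S : Finset (Fin n), ∑ i ∈ S, d i ≤ (S.card : ℝ) * ((S.card : ℝ) - 1)
        + ∑ i ∈ Sᶜ, min (S.card : ℝ) (d i))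
    (σ : Fin n → ℝ) (hσ : ∀ i, σ i = 1 ∨ σ i = 0 ∨ σ i = -1) :
    ∑ i, 2 * σ i * d i ≤ ∑ k, ∑ j ∈ univ.erase k, max (σ j + σ k) 0 := by
  classical
  set P : Finset (Fin n) := univ.filter (fun i => σ i = 1) with hP
  set T : Finset (Fin n) := univ.filter (fun i => σ i = -1) with hT
  set E : Fin n → ℝ := fun i => if σ i = 1 then 1 else 0 with hE
  set s : ℝ := (P.card : ℝ) with hs
  set t : ℝ := (T.card : ℝ) with ht
  have hSE : ∑ i, E i = s := by
    simp only [hE, Finset.sum_boole, hs, hP]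
  have hpair : ∀ j k : Fin n, max (σ j + σ k) 0
      = (E j * (1 + σ k) - E j * E k) + (E k * (1 + σ j) - E k * E j) := by
    intro j k
    rcases hσ j with hj | hj | hj <;> rcases hσ k with hk | hk | hk <;>
      simp [hE, hj, hk] <;> norm_num
  have hstep1 : ∑ k, ∑ j ∈ univ.erase k, max (σ j + σ k) 0
      = 2 * ∑ k, ∑ j ∈ univ.erase k, (E j * (1 + σ k) - E j * E k) := by
    have hcomm := aux_offdiag_comm (fun j k => E j * (1 + σ k) - E j * E k)
    calc ∑ k, ∑ j ∈ univ.erase k, max (σ j + σ k) 0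
        = ∑ k, ∑ j ∈ univ.erase k,
            ((E j * (1 + σ k) - E j * E k) + (E k * (1 + σ j) - E k * E j)) :=
          Finset.sum_congr rfl fun k _ => Finset.sum_congr rfl fun j _ => hpair j k
      _ = (∑ k, ∑ j ∈ univ.erase k, (E j * (1 + σ k) - E j * E k))
          + ∑ k, ∑ j ∈ univ.erase k, (E k * (1 + σ j) - E k * E j) := by
          rw [← Finset.sum_add_distrib]
          exact Finset.sum_congr rfl fun k _ => Finset.sum_add_distrib
      _ = 2 * ∑ k, ∑ j ∈ univ.erase k, (E j * (1 + σ k) - E j * E k) := by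
          rw [← hcomm]; ring
  have hinner : ∀ k : Fin n, ∑ j ∈ univ.erase k, (E j * (1 + σ k) - E j * E k)
      = (s - E k) * (1 + σ k - E k) := by
    intro k
    have h1 : ∑ j ∈ univ.erase k, E j = s - E k := by
      rw [eq_sub_iff_add_eq, Finset.sum_erase_add _ _ (mem_univ k), hSE]
    calc ∑ j ∈ univ.erase k, (E j * (1 + σ k) - E j * E k)
        = ∑ j ∈ univ.erase k, E j * (1 + σ k - E k) :=
          Finset.sum_congr rfl fun j _ => by ring
      _ = (s - E k) * (1 + σ k - E k) := by rw [← Finset.sum_mul, h1]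
  have hperk : ∀ k : Fin n, (s - E k) * (1 + σ k - E k)
      = (s - E k) - (if σ k = -1 then s else 0) := by
    intro k
    rcases hσ k with h | h | h <;> simp [hE, h] <;> norm_num <;> ring
  have hsum2 : ∑ k : Fin n, ((s - E k) - (if σ k = -1 then s else 0))
      = ((n : ℝ) * s - s) - t * s := by
    rw [Finset.sum_sub_distrib, Finset.sum_sub_distrib, hSE]
    congr 1
    · rw [Finset.sum_const, card_univ, Fintype.card_fin]
      simp [nsmul_eq_mul]
    · rw [← Finset.sum_filter, ← hT, Finset.sum_const]
      simp [ht, nsmul_eq_mul, mul_comm]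
  have hRHS : ∑ k, ∑ j ∈ univ.erase k, (E j * (1 + σ k) - E j * E k)
      = ((n : ℝ) * s - s) - t * s := by
    calc ∑ k, ∑ j ∈ univ.erase k, (E j * (1 + σ k) - E j * E k)
        = ∑ k, (s - E k) * (1 + σ k - E k) :=
          Finset.sum_congr rfl fun k _ => hinner k
      _ = ∑ k : Fin n, ((s - E k) - (if σ k = -1 then s else 0)) :=
          Finset.sum_congr rfl fun k _ => hperk k
      _ = ((n : ℝ) * s - s) - t * s := hsum2
  have hLHS : ∑ i, 2 * σ i * d i = 2 * ∑ i ∈ P, d i - 2 * ∑ i ∈ T, d i := by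
    have h1 : ∀ i, 2 * σ i * d i
        = (if σ i = 1 then 2 * d i else 0) + (if σ i = -1 then -(2 * d i) else 0) := by
      intro i; rcases hσ i with h | h | h <;> simp [h] <;> norm_num
    calc ∑ i, 2 * σ i * d i
        = ∑ i : Fin n, ((if σ i = 1 then 2 * d i else 0) + (if σ i = -1 then -(2 * d i) else 0)) :=
          Finset.sum_congr rfl fun i _ => h1 i
      _ = ∑ i ∈ P, 2 * d i + ∑ i ∈ T, -(2 * d i) := by
          rw [Finset.sum_add_distrib, ← Finset.sum_filter, ← Finset.sum_filter, ← hP, ← hT]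
      _ = 2 * ∑ i ∈ P, d i - 2 * ∑ i ∈ T, d i := by
          rw [← Finset.mul_sum]
          rw [show ∑ i ∈ T, -(2 * d i) = -(2 * ∑ i ∈ T, d i) by
            simp [Finset.mul_sum]]
          ring
  -- Erdős–Gallai at P
  have hTP : T ⊆ Pᶜ := by
    intro i hi
    rw [hT] at hi
    have h2 : σ i = -1 := (Finset.mem_filter.mp hi).2
    simp only [Finset.mem_compl, hP, Finset.mem_filter, Finset.mem_univ, true_and]
    rw [h2]; norm_num
  have hEGP := hEG P
  rw [← hs] at hEGP
  have hsplit : ∑ i ∈ Pᶜ \ T, min s (d i) + ∑ i ∈ T, min s (d i)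
      = ∑ i ∈ Pᶜ, min s (d i) := Finset.sum_sdiff hTP
  have hb1 : ∑ i ∈ T, min s (d i) ≤ ∑ i ∈ T, d i :=
    Finset.sum_le_sum fun i _ => min_le_right _ _
  have hb2 : ∑ i ∈ Pᶜ \ T, min s (d i) ≤ ((Pᶜ \ T).card : ℝ) * s := by
    have h := Finset.sum_le_card_nsmul (Pᶜ \ T) (fun i => min s (d i)) s
      (fun i _ => min_le_left _ _)
    simpa [nsmul_eq_mul] using h
  have hcards : ((Pᶜ \ T).card : ℝ) = (n : ℝ) - s - t := by
    have h1 : P.card ≤ n := by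
      simpa [Fintype.card_fin] using Finset.card_le_univ P
    have h2 : T.card ≤ n - P.card := by
      simpa [Finset.card_compl, Fintype.card_fin] using Finset.card_le_card hTP
    rw [Finset.card_sdiff_of_subset hTP, Finset.card_compl, Fintype.card_fin,
      Nat.cast_sub h2, Nat.cast_sub h1, hs, ht]
  rw [hcards] at hb2
  have hiden : s * (s - 1) + ((n : ℝ) - s - t) * s = ((n : ℝ) * s - s) - t * s := by ring
  rw [hLHS, hstep1, hRHS]
  linarith

lemma aux_core {n : ℕ} (d : Fin n → ℝ)
    (hEG : ∀ S : Finset (Fin n), ∑ i ∈ S, d i ≤ (S.card : ℝ) * ((S.card : ℝ) - 1)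
        + ∑ i ∈ Sᶜ, min (S.card : ℝ) (d i)) :
    ∀ N (y : Fin n → ℝ), (univ.filter fun i => y i ≠ 0).card ≤ N →
      ∑ i, 2 * y i * d i ≤ ∑ k, ∑ j ∈ univ.erase k, max (y j + y k) 0 := by
  classical
  intro N
  induction N with
  | zero =>
    intro y hy
    have h0 : ∀ i, y i = 0 := by
      intro i
      by_contra h
      have : i ∈ univ.filter fun i => y i ≠ 0 := mem_filter.mpr ⟨mem_univ i, h⟩
      have := Finset.card_pos.mpr ⟨i, this⟩
      omega
    simp [h0]
  | succ N ih =>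
    intro y hy
    by_cases hsupp : (univ.filter fun i => y i ≠ 0) = ∅
    · have h0 : ∀ i, y i = 0 := by
        intro i
        by_contra h
        have : i ∈ univ.filter fun i => y i ≠ 0 := mem_filter.mpr ⟨mem_univ i, h⟩
        rw [hsupp] at this
        exact absurd this (Finset.notMem_empty i)
      simp [h0]
    · have hne : (univ.filter fun i => y i ≠ 0).Nonempty :=
        Finset.nonempty_iff_ne_empty.mpr hsupp
      set ε := (univ.filter fun i => y i ≠ 0).inf' hne (fun i => |y i|) with hεdef
      have hεpos : 0 < ε :=
        (Finset.lt_inf'_iff hne).mpr (fun i hi => abs_pos.mpr (mem_filter.mp hi).2)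
      have hεle : ∀ i : Fin n, y i ≠ 0 → ε ≤ |y i| := fun i hi =>
        Finset.inf'_le _ (mem_filter.mpr ⟨mem_univ i, hi⟩)
      obtain ⟨i0, hi0mem, hi0⟩ := Finset.exists_mem_eq_inf' hne (fun i => |y i|)
      rw [← hεdef] at hi0
      set σ : Fin n → ℝ := fun i => if 0 < y i then (1:ℝ) else if y i < 0 then -1 else 0
        with hσ
      set y' : Fin n → ℝ := fun i => y i - ε * σ i with hy'
      have hσval : ∀ i, σ i = 1 ∨ σ i = 0 ∨ σ i = -1 := by
        intro i
        rw [hσ]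
        rcases lt_trichotomy (y i) 0 with h | h | h
        · simp [h, asymm h]
        · simp [h]
        · simp [h, asymm h]
      have hy'i0 : y' i0 = 0 := by
        have hne0 : y i0 ≠ 0 := (mem_filter.mp hi0mem).2
        rcases lt_trichotomy (y i0) 0 with h | h | h
        · have : ε = -(y i0) := by rw [hi0, abs_of_neg h]
          simp [hy', hσ, asymm h, h, this]
        · exact absurd h hne0
        · have : ε = y i0 := by rw [hi0, abs_of_pos h]
          simp [hy', hσ, h, this]
      have hsub : (univ.filter fun i => y' i ≠ 0) ⊆ (univ.filter fun i => y i ≠ 0).erase i0 := by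
        intro i hi
        have h2 : y' i ≠ 0 := (mem_filter.mp hi).2
        refine Finset.mem_erase.mpr ⟨?_, ?_⟩
        · rintro rfl; exact h2 hy'i0
        · refine mem_filter.mpr ⟨mem_univ i, ?_⟩
          intro h0
          apply h2
          simp [hy', hσ, h0]
      have hcard : (univ.filter fun i => y' i ≠ 0).card ≤ N := by
        have hc1 := Finset.card_le_card hsub
        have hc2 := Finset.card_erase_of_mem hi0mem
        have hc3 := Finset.card_pos.mpr ⟨i0, hi0mem⟩
        omega
      have hIH := ih y' hcard
      have hB := aux_claimB d hEG σ hσval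
      have hpair : ∀ j k : Fin n,
          max (y j + y k) 0 = ε * max (σ j + σ k) 0 + max (y' j + y' k) 0 := by
        intro j k
        have := aux_pair ε (y j) (y k) (σ j) (σ k) hεpos (hεle j) (hεle k)
          (by rw [hσ]) (by rw [hσ])
        rw [this, hy']
      calc ∑ i, 2 * y i * d i
          = ε * (∑ i, 2 * σ i * d i) + ∑ i, 2 * y' i * d i := by
            rw [Finset.mul_sum, ← Finset.sum_add_distrib]
            refine Finset.sum_congr rfl fun i _ => ?_
            rw [hy']
            ring
        _ ≤ ε * (∑ k, ∑ j ∈ univ.erase k, max (σ j + σ k) 0)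
              + ∑ k, ∑ j ∈ univ.erase k, max (y' j + y' k) 0 :=
            add_le_add (mul_le_mul_of_nonneg_left hB hεpos.le) hIH
        _ = ∑ k, ∑ j ∈ univ.erase k, max (y j + y k) 0 := by
            rw [Finset.mul_sum, ← Finset.sum_add_distrib]
            refine Finset.sum_congr rfl fun k _ => ?_
            rw [Finset.mul_sum, ← Finset.sum_add_distrib]
            exact Finset.sum_congr rfl fun j _ => (hpair j k).symm

/-- a nonincreasing sequence of positive rationals satisfying the
Erdős–Gallai inequalities admits a symmetric fractional adjacency matrix:
a symmetric real matrix with zero diagonal, entries in `[0,1]` and row sums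
`d₁, …, d_n`; i.e. the polytope `𝒫(D)` is nonempty. -/
theorem stmt12 (n : ℕ) (d : ℕ → ℚ)
    (hpos : ∀ i < n, 0 < d i)
    (hmono : ∀ i j, i ≤ j → j < n → d j ≤ d i)
    (hEG : ∀ k, 1 ≤ k → k ≤ n →
      ∑ i ∈ Finset.range k, d i ≤ (k : ℚ) * ((k : ℚ) - 1)
        + ∑ i ∈ Finset.Ico k n, min (k : ℚ) (d i)) :
    ∃ x : Fin n → Fin n → ℝ,
      (∀ j k, x j k = x k j) ∧ (∀ j, x j j = 0) ∧
      (∀ j k, 0 ≤ x j k ∧ x j k ≤ 1) ∧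
      (∀ k : Fin n, ∑ j ∈ Finset.univ.erase k, x j k = ((d (k : ℕ)) : ℝ)) := by
  classical
  set dr : Fin n → ℝ := fun i => ((d (i : ℕ) : ℚ) : ℝ) with hdrdef
  have hdr0 : ∀ i : Fin n, 0 ≤ dr i := by
    intro i
    have := hpos (i : ℕ) i.isLt
    rw [hdrdef]
    simp only
    exact_mod_cast this.le
  -- subset form of Erdős–Gallai
  have hEGsub : ∀ S : Finset (Fin n),
      ∑ i ∈ S, dr i ≤ (S.card : ℝ) * ((S.card : ℝ) - 1) + ∑ i ∈ Sᶜ, min (S.card : ℝ) (dr i) := by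
    intro S
    rcases Nat.eq_zero_or_pos S.card with h0 | h1
    · have hSempty : S = ∅ := Finset.card_eq_zero.mp h0
      rw [hSempty]
      simp only [Finset.sum_empty, Finset.card_empty, Nat.cast_zero, Finset.compl_empty]
      rw [Finset.sum_eq_zero (fun i (_ : i ∈ (univ : Finset (Fin n))) => min_eq_left (hdr0 i))]
      norm_num
    · set k := S.card with hk
      have hkn : k ≤ n := by rw [hk]; simpa [Fintype.card_fin] using Finset.card_le_univ S
      have hEGk := hEG k h1 hkn
      have hEGr : ∑ i ∈ Finset.range k, ((d i : ℚ) : ℝ)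
          ≤ (k : ℝ) * ((k : ℝ) - 1) + ∑ i ∈ Finset.Ico k n, min (k : ℝ) ((d i : ℚ) : ℝ) := by
        exact_mod_cast hEGk
      set G : ℕ → ℝ := fun m => ((d m : ℚ) : ℝ) + min (k : ℝ) ((d m : ℚ) : ℝ) with hG
      have hGanti : ∀ i j : ℕ, i ≤ j → j < n → G j ≤ G i := by
        intro i j hij hjn
        have hd' : ((d j : ℚ) : ℝ) ≤ ((d i : ℚ) : ℝ) := by exact_mod_cast hmono i j hij hjn
        simp only [hG]
        exact add_le_add hd' (min_le_min le_rfl hd')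
      have h2 := aux_subset_sum_le G hGanti S
      rw [← hk] at h2
      have h3 : ∑ m ∈ Finset.range k, G m
          = ∑ m ∈ Finset.range k, ((d m : ℚ) : ℝ)
            + ∑ m ∈ Finset.range k, min (k : ℝ) ((d m : ℚ) : ℝ) := by
        simp only [hG]
        exact Finset.sum_add_distrib
      have h4 := Finset.sum_range_add_sum_Ico (fun m => min (k : ℝ) ((d m : ℚ) : ℝ)) hkn
      have h5 : ∑ i : Fin n, min (k : ℝ) (dr i)
          = ∑ m ∈ Finset.range n, min (k : ℝ) ((d m : ℚ) : ℝ) :=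
        Fin.sum_univ_eq_sum_range (fun m => min (k : ℝ) ((d m : ℚ) : ℝ)) n
      have h6 := Finset.sum_add_sum_compl S (fun i => min (k : ℝ) (dr i))
      have h7 : ∑ i ∈ S, G (i : ℕ) = ∑ i ∈ S, dr i + ∑ i ∈ S, min (k : ℝ) (dr i) := by
        rw [← Finset.sum_add_distrib]
      linarith [hEGr, h2, h3, h4, h5, h6, h7]
  -- the polytope and its image
  set M : Set (Fin n → Fin n → ℝ) :=
    {x | (∀ j k, x j k = x k j) ∧ (∀ j, x j j = 0) ∧ ∀ j k, 0 ≤ x j k ∧ x j k ≤ 1} with hMdef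
  set L : (Fin n → Fin n → ℝ) →ₗ[ℝ] (Fin n → ℝ) :=
    { toFun := fun x k => ∑ j ∈ univ.erase k, x j k
      map_add' := by intro x z; funext k; exact Finset.sum_add_distrib
      map_smul' := by
        intro c x
        funext k
        simp only [RingHom.id_apply, Pi.smul_apply, smul_eq_mul]
        rw [Finset.mul_sum] } with hLdef
  have hMconvex : Convex ℝ M := by
    intro x hx z hz a b ha hb hab
    rw [hMdef, Set.mem_setOf_eq] at hx hz ⊢
    obtain ⟨hx1, hx2, hx3⟩ := hx
    obtain ⟨hz1, hz2, hz3⟩ := hz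
    refine ⟨fun j k => ?_, fun j => ?_, fun j k => ?_⟩
    · simp only [Pi.add_apply, Pi.smul_apply, smul_eq_mul, hx1 j k, hz1 j k]
    · simp only [Pi.add_apply, Pi.smul_apply, smul_eq_mul, hx2 j, hz2 j]; ring
    · obtain ⟨hx3a, hx3b⟩ := hx3 j k
      obtain ⟨hz3a, hz3b⟩ := hz3 j k
      constructor
      · simp only [Pi.add_apply, Pi.smul_apply, smul_eq_mul]
        have := mul_le_mul_of_nonneg_left hx3a ha
        have := mul_le_mul_of_nonneg_left hz3a hb
        nlinarith
      · simp only [Pi.add_apply, Pi.smul_apply, smul_eq_mul]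
        nlinarith [mul_le_mul_of_nonneg_left hx3b ha, mul_le_mul_of_nonneg_left hz3b hb]
  have hMcompact : IsCompact M := by
    have hMeq : M = (Set.pi Set.univ fun _ : Fin n =>
          Set.pi Set.univ fun _ : Fin n => Set.Icc (0:ℝ) 1)
        ∩ {x | (∀ j k, x j k = x k j) ∧ (∀ j, x j j = 0)} := by
      ext x
      simp only [hMdef, Set.mem_setOf_eq, Set.mem_inter_iff, Set.mem_pi, Set.mem_univ,
        true_implies, Set.mem_Icc]
      tauto
    rw [hMeq]
    refine IsCompact.inter_right
      (isCompact_univ_pi fun _ => isCompact_univ_pi fun _ => isCompact_Icc) ?_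
    have he1 : {x : Fin n → Fin n → ℝ | ∀ j k, x j k = x k j}
        = ⋂ j, ⋂ k, {x : Fin n → Fin n → ℝ | x j k = x k j} := by
      ext x; simp [Set.mem_iInter]
    have he2 : {x : Fin n → Fin n → ℝ | ∀ j, x j j = 0}
        = ⋂ j, {x : Fin n → Fin n → ℝ | x j j = 0} := by
      ext x; simp [Set.mem_iInter]
    have hc1 : IsClosed {x : Fin n → Fin n → ℝ | ∀ j k, x j k = x k j} := by
      rw [he1]
      exact isClosed_iInter fun j => isClosed_iInter fun k =>
        isClosed_eq ((continuous_apply k).comp (continuous_apply j))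
          ((continuous_apply j).comp (continuous_apply k))
    have hc2 : IsClosed {x : Fin n → Fin n → ℝ | ∀ j, x j j = 0} := by
      rw [he2]
      exact isClosed_iInter fun j =>
        isClosed_eq ((continuous_apply j).comp (continuous_apply j)) continuous_const
    have : {x : Fin n → Fin n → ℝ | (∀ j k, x j k = x k j) ∧ (∀ j, x j j = 0)}
        = {x : Fin n → Fin n → ℝ | ∀ j k, x j k = x k j}
          ∩ {x : Fin n → Fin n → ℝ | ∀ j, x j j = 0} := rfl
    rw [this]
    exact hc1.inter hc2
  have hKconv : Convex ℝ (L '' M) := hMconvex.linear_image L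
  have hKcomp : IsCompact (L '' M) := hMcompact.image L.continuous_of_finiteDimensional
  have hdrK : dr ∈ L '' M := by
    by_contra hnot
    obtain ⟨f, u, hfK, hfd⟩ := geometric_hahn_banach_closed_point hKconv hKcomp.isClosed hnot
    set y : Fin n → ℝ := fun i => f (fun j => if i = j then (1:ℝ) else 0) with hydef
    have hrepr : ∀ z : Fin n → ℝ, f z = ∑ i, z i * y i := by
      intro z
      calc f z = f (∑ i, z i • fun j => if i = j then (1:ℝ) else 0) := by
            rw [← pi_eq_sum_univ z]
        _ = ∑ i, z i * y i := by
            rw [map_sum]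
            refine Finset.sum_congr rfl fun i _ => ?_
            rw [map_smul, smul_eq_mul, hydef]
    set xs : Fin n → Fin n → ℝ := fun j k => if j ≠ k ∧ 0 < y j + y k then 1 else 0 with hxsdef
    have hxsymm : ∀ j k : Fin n, xs j k = xs k j := by
      intro j k
      have hcond : (j ≠ k ∧ 0 < y j + y k) ↔ (k ≠ j ∧ 0 < y k + y j) := by
        rw [add_comm (y j) (y k)]
        constructor <;> rintro ⟨hh1, hh2⟩ <;> exact ⟨hh1.symm, hh2⟩
      simp only [hxsdef]
      rw [if_congr hcond rfl rfl]
    have hxsM : xs ∈ M := by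
      rw [hMdef, Set.mem_setOf_eq]
      refine ⟨hxsymm, fun j => ?_, fun j k => ?_⟩
      · simp [hxsdef]
      · simp only [hxsdef]
        split_ifs <;> norm_num
    have hxsK : L xs ∈ L '' M := Set.mem_image_of_mem _ hxsM
    have hfLxs : f (L xs) = ∑ k, (∑ j ∈ univ.erase k, xs j k) * y k := hrepr (L xs)
    have hmax : ∑ k, ∑ j ∈ univ.erase k, max (y j + y k) 0 = 2 * f (L xs) := by
      have hA : ∀ k : Fin n, ∀ j ∈ univ.erase k,
          max (y j + y k) 0 = xs j k * y j + xs j k * y k := by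
        intro k j hj
        have hjk : j ≠ k := Finset.ne_of_mem_erase hj
        simp only [hxsdef]
        by_cases h : 0 < y j + y k
        · rw [if_pos ⟨hjk, h⟩, max_eq_left h.le]; ring
        · rw [if_neg (by tauto), max_eq_right (not_lt.mp h)]; ring
      have h1 : ∑ k, ∑ j ∈ univ.erase k, xs j k * y j
          = ∑ k, ∑ j ∈ univ.erase k, xs j k * y k := by
        calc ∑ k, ∑ j ∈ univ.erase k, xs j k * y j
            = ∑ k, ∑ j ∈ univ.erase k, xs k j * y j :=
              Finset.sum_congr rfl fun k _ => Finset.sum_congr rfl fun j _ => by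
                rw [hxsymm j k]
          _ = ∑ k, ∑ j ∈ univ.erase k, xs j k * y k :=
              (aux_offdiag_comm (fun j k => xs j k * y k)).symm
      calc ∑ k, ∑ j ∈ univ.erase k, max (y j + y k) 0
          = ∑ k, ∑ j ∈ univ.erase k, (xs j k * y j + xs j k * y k) :=
            Finset.sum_congr rfl fun k _ => Finset.sum_congr rfl fun j hj => hA k j hj
        _ = (∑ k, ∑ j ∈ univ.erase k, xs j k * y j)
            + ∑ k, ∑ j ∈ univ.erase k, xs j k * y k := by
            rw [← Finset.sum_add_distrib]
            exact Finset.sum_congr rfl fun k _ => Finset.sum_add_distrib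
        _ = 2 * f (L xs) := by
            rw [h1, hfLxs]
            have h2s : ∑ k, (∑ j ∈ univ.erase k, xs j k) * y k
                = ∑ k, ∑ j ∈ univ.erase k, xs j k * y k :=
              Finset.sum_congr rfl fun k _ => Finset.sum_mul _ _ _
            rw [h2s]
            ring
    have hcore := aux_core dr hEGsub ((univ.filter fun i => y i ≠ 0).card) y le_rfl
    have hfdr : f dr = ∑ i, dr i * y i := hrepr dr
    have h2fdr : 2 * f dr ≤ 2 * f (L xs) := by
      rw [← hmax]
      calc 2 * f dr = ∑ i, 2 * y i * dr i := by
            rw [hfdr, Finset.mul_sum]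
            exact Finset.sum_congr rfl fun i _ => by ring
        _ ≤ _ := hcore
    have hlt := hfK _ hxsK
    linarith [hfd, hlt, h2fdr]
  obtain ⟨x, hxM, hxL⟩ := hdrK
  rw [hMdef, Set.mem_setOf_eq] at hxM
  obtain ⟨h1, h2, h3⟩ := hxM
  refine ⟨x, h1, h2, h3, fun k => ?_⟩
  have h4 := congrFun hxL k
  exact h4
end

section
/- Let $D=(d_1,\dots,d_n)$ be positive reals with $d_1\ge\cdots\ge d_n$ satisfying the strict Erdős–Gallai inequalities $\sum_{i=1}^k d_i < k(k-1)+\sum_{i=k+1}^n\min\{k,d_i\}$ for $k=1,\dots,n$. Then the polytope $\mathcal{P}(D)$ contains a point $(\eta_{\{j,k\}})$ with $0<\eta_{\{j,k\}}<1$ for all pairs $\{j,k\}$. -/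
open Finset

private lemma sum_antitone_le (n k : ℕ) (hk : k ≤ n) (f : ℕ → ℝ)
    (hf : ∀ i j, i ≤ j → j < n → f j ≤ f i)
    (S : Finset ℕ) (hSn : S ⊆ Finset.range n) (hSk : S.card = k) :
    ∑ i ∈ S, f i ≤ ∑ i ∈ Finset.range k, f i := by
  rcases eq_or_lt_of_le hk with h | h
  · subst h
    have : S = Finset.range k := Finset.eq_of_subset_of_card_le hSn (by rw [hSk, card_range])
    rw [this]
  · set R := Finset.range k with hR
    have hcard : (S \ R).card = (R \ S).card :=
      Finset.card_sdiff_comm (by rw [hSk, card_range])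
    have h1 : ∑ i ∈ S \ R, f i ≤ (S \ R).card • f k := by
      apply Finset.sum_le_card_nsmul
      intro i hi
      simp only [Finset.mem_sdiff, hR, Finset.mem_range] at hi
      exact hf k i (by omega) (Finset.mem_range.mp (hSn hi.1))
    have h2 : (R \ S).card • f k ≤ ∑ i ∈ R \ S, f i := by
      apply Finset.card_nsmul_le_sum
      intro i hi
      simp only [Finset.mem_sdiff, hR, Finset.mem_range] at hi
      exact hf i k (by omega) h
    have e1 := Finset.sum_inter_add_sum_sdiff S R f
    have e2 := Finset.sum_inter_add_sum_sdiff R S f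
    rw [Finset.inter_comm] at e2
    rw [hcard] at h1
    linarith

private lemma move_calc (n : ℕ) (d : ℕ → ℝ) (x : Fin n → Fin n → ℝ)
    (hsym : ∀ j k, x j k = x k j) (hdiag : ∀ j, x j j = 0)
    (hbox : ∀ j k, x j k ∈ Set.Icc (0:ℝ) 1)
    (j l : Fin n) (hjl : j ≠ l) (δ : ℝ) (h0 : 0 ≤ x j l + δ) (h1 : x j l + δ ≤ 1) :
    ∃ y : Fin n → Fin n → ℝ,
      (∀ a b, y a b = y b a) ∧ (∀ a, y a a = 0) ∧ (∀ a b, y a b ∈ Set.Icc (0:ℝ) 1) ∧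
      (∑ k : Fin n, (d k - ∑ a ∈ Finset.univ.erase k, y a k)^2)
        = (∑ k : Fin n, (d k - ∑ a ∈ Finset.univ.erase k, x a k)^2)
          + 2*δ^2 - 2*δ*((d j - ∑ a ∈ Finset.univ.erase j, x a j)
            + (d l - ∑ a ∈ Finset.univ.erase l, x a l)) := by
  classical
  set y : Fin n → Fin n → ℝ :=
    fun a b => x a b + if (a = j ∧ b = l) ∨ (a = l ∧ b = j) then δ else 0 with hy
  have hysym : ∀ a b, y a b = y b a := by
    intro a b
    simp only [hy, hsym a b]
    congr 1
    refine if_congr ?_ rfl rfl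
    tauto
  have hydiag : ∀ a, y a a = 0 := by
    intro a
    simp only [hy]
    rw [if_neg, hdiag a, add_zero]
    rintro (⟨rfl, rfl⟩ | ⟨rfl, rfl⟩) <;> exact hjl rfl
  have hybox : ∀ a b, y a b ∈ Set.Icc (0:ℝ) 1 := by
    intro a b
    simp only [hy]
    by_cases h : (a = j ∧ b = l) ∨ (a = l ∧ b = j)
    · rw [if_pos h]
      rcases h with ⟨rfl, rfl⟩ | ⟨rfl, rfl⟩
      · exact ⟨h0, h1⟩
      · rw [hsym a b]; exact ⟨h0, h1⟩
    · rw [if_neg h, add_zero]; exact hbox a b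
  have hrs : ∀ k : Fin n, (∑ a ∈ Finset.univ.erase k, y a k)
      = (∑ a ∈ Finset.univ.erase k, x a k) + (if k = j ∨ k = l then δ else 0) := by
    intro k
    simp only [hy, Finset.sum_add_distrib]
    congr 1
    by_cases hkj : k = j
    · subst hkj
      rw [if_pos (Or.inl rfl),
        Finset.sum_eq_single_of_mem l (by simp [Ne.symm hjl]), if_pos (Or.inr ⟨rfl, rfl⟩)]
      intro b _ hbl
      rw [if_neg]
      rintro (⟨_, hkl⟩ | ⟨hbl2, _⟩)
      · exact hjl hkl
      · exact hbl hbl2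
    · by_cases hkl : k = l
      · subst hkl
        rw [if_pos (Or.inr rfl),
          Finset.sum_eq_single_of_mem j (by simp [hjl]), if_pos (Or.inl ⟨rfl, rfl⟩)]
        intro b _ hbj
        rw [if_neg]
        rintro (⟨hbj2, _⟩ | ⟨_, hkj2⟩)
        · exact hbj hbj2
        · exact hkj hkj2
      · rw [if_neg (by tauto)]
        apply Finset.sum_eq_zero
        intro a _
        rw [if_neg]
        rintro (⟨_, h⟩ | ⟨_, h⟩)
        · exact hkl h
        · exact hkj h
  have expand : ∀ k : Fin n, (d k - ∑ a ∈ Finset.univ.erase k, y a k)^2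
      = (d k - ∑ a ∈ Finset.univ.erase k, x a k)^2
        + (if k = j ∨ k = l then δ^2 - 2*δ*(d k - ∑ a ∈ Finset.univ.erase k, x a k) else 0) := by
    intro k
    rw [hrs k]
    by_cases h : k = j ∨ k = l
    · rw [if_pos h, if_pos h]; ring
    · rw [if_neg h, if_neg h]; ring
  have hsum2 : (∑ k : Fin n, (if k = j ∨ k = l then
        δ^2 - 2*δ*(d k - ∑ a ∈ Finset.univ.erase k, x a k) else 0))
      = (δ^2 - 2*δ*(d j - ∑ a ∈ Finset.univ.erase j, x a j))
        + (δ^2 - 2*δ*(d l - ∑ a ∈ Finset.univ.erase l, x a l)) := by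
    have h1 : ∀ k : Fin n, (if k = j ∨ k = l then
          δ^2 - 2*δ*(d k - ∑ a ∈ Finset.univ.erase k, x a k) else 0)
        = (if k ∈ ({j, l} : Finset (Fin n)) then
          δ^2 - 2*δ*(d k - ∑ a ∈ Finset.univ.erase k, x a k) else 0) := by
      intro k
      refine if_congr ?_ rfl rfl
      simp
    rw [Finset.sum_congr rfl fun k _ => h1 k, Finset.sum_ite_mem, Finset.univ_inter,
      Finset.sum_pair hjl]
  refine ⟨y, hysym, hydiag, hybox, ?_⟩
  rw [Finset.sum_congr rfl fun k _ => expand k, Finset.sum_add_distrib, hsum2]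
  ring

private lemma lemA (n : ℕ) (d : ℕ → ℝ) (hpos : ∀ i < n, 0 ≤ d i)
    (hmono : ∀ i j, i ≤ j → j < n → d j ≤ d i)
    (hEG : ∀ k, 1 ≤ k → k ≤ n →
      ∑ i ∈ Finset.range k, d i < (k : ℝ) * ((k : ℝ) - 1)
        + ∑ i ∈ Finset.Ico k n, min (k : ℝ) (d i)) :
    ∃ x : Fin n → Fin n → ℝ,
      (∀ j k, x j k = x k j) ∧ (∀ j, x j j = 0) ∧
      (∀ j k, x j k ∈ Set.Icc (0:ℝ) 1) ∧
      (∀ k : Fin n, ∑ j ∈ Finset.univ.erase k, x j k = d (k : ℕ)) := by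
  classical
  rcases Nat.eq_zero_or_pos n with hn | hn
  · subst hn
    exact ⟨fun _ _ => 0, fun j => j.elim0, fun j => j.elim0, fun j => j.elim0, fun j => j.elim0⟩
  haveI : Nonempty (Fin n) := Fin.pos_iff_nonempty.mp hn
  -- the compact set and the minimizer
  set K := {x : Fin n → Fin n → ℝ | (∀ j k, x j k = x k j) ∧ (∀ j, x j j = 0) ∧
        ∀ j k, x j k ∈ Set.Icc (0:ℝ) 1} with hK
  set F : (Fin n → Fin n → ℝ) → ℝ :=
    fun x => ∑ k : Fin n, (d k - ∑ j ∈ Finset.univ.erase k, x j k)^2 with hF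
  have hKc : IsClosed K := by
    have : K = (⋂ j, ⋂ k, {x : Fin n → Fin n → ℝ | x j k = x k j}) ∩
        ((⋂ j, {x : Fin n → Fin n → ℝ | x j j = 0}) ∩
         (⋂ j, ⋂ k, {x : Fin n → Fin n → ℝ | x j k ∈ Set.Icc (0:ℝ) 1})) := by
      ext x
      simp only [hK, Set.mem_setOf_eq, Set.mem_inter_iff, Set.mem_iInter]
    rw [this]
    refine (isClosed_iInter fun j => isClosed_iInter fun k =>
        isClosed_eq (continuous_apply_apply j k) (continuous_apply_apply k j)).inter
      (IsClosed.inter (isClosed_iInter fun j =>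
          isClosed_eq (continuous_apply_apply j j) continuous_const)
        (isClosed_iInter fun j => isClosed_iInter fun k =>
          IsClosed.preimage (continuous_apply_apply j k) isClosed_Icc))
  have hKb : Bornology.IsBounded K := by
    apply Bornology.IsBounded.subset
      (Metric.isBounded_closedBall (x := (0 : Fin n → Fin n → ℝ)) (r := 1))
    intro x hx
    simp only [Metric.mem_closedBall, dist_zero_right]
    rw [pi_norm_le_iff_of_nonneg (by norm_num)]
    intro i
    rw [pi_norm_le_iff_of_nonneg (by norm_num)]
    intro j
    have := hx.2.2 i j
    rw [Real.norm_eq_abs, abs_le]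
    constructor
    · linarith [this.1]
    · exact this.2
  have hKcpt : IsCompact K := Metric.isCompact_of_isClosed_isBounded hKc hKb
  have hKne : K.Nonempty := ⟨0, by simp [hK], by simp [hK], by simp [hK]⟩
  have hFc : Continuous F := by
    apply continuous_finset_sum
    intro k _
    exact ((continuous_const.sub (continuous_finset_sum _ fun j _ =>
      continuous_apply_apply j k)).pow 2)
  obtain ⟨x, hxK, hminOn⟩ := hKcpt.exists_isMinOn hKne hFc.continuousOn
  have hmin : ∀ y ∈ K, F x ≤ F y := fun y hy => hminOn hy
  obtain ⟨hsym, hdiag, hbox⟩ := hxK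
  -- notation
  set rs : Fin n → ℝ := fun k => ∑ j ∈ Finset.univ.erase k, x j k with hrs
  set e : Fin n → ℝ := fun k => d k - rs k with he
  -- stationarity
  have stat1 : ∀ j l : Fin n, j ≠ l → 0 < e j + e l → x j l = 1 := by
    intro j l hjl hel
    by_contra hx1
    have hlt : x j l < 1 := lt_of_le_of_ne (hbox j l).2 hx1
    set δ : ℝ := min ((e j + e l)/2) (1 - x j l) with hδ
    have hδpos : 0 < δ := lt_min (half_pos hel) (by linarith)
    obtain ⟨y, hy1, hy2, hy3, hy4⟩ := move_calc n d x hsym hdiag hbox j l hjl δ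
      (by have := (hbox j l).1; linarith)
      (by have : δ ≤ 1 - x j l := min_le_right _ _; linarith)
    have hle : (∑ k : Fin n, (d k - ∑ a ∈ Finset.univ.erase k, x a k)^2)
        ≤ (∑ k : Fin n, (d k - ∑ a ∈ Finset.univ.erase k, y a k)^2) :=
      hmin y ⟨hy1, hy2, hy3⟩
    rw [hy4] at hle
    have hS : 0 < e j + e l := hel
    have hd2 : δ ≤ (e j + e l)/2 := min_le_left _ _
    simp only [he, hrs] at hS hd2
    nlinarith [hle, hδpos, hd2, hS]
  have stat0 : ∀ j l : Fin n, j ≠ l → e j + e l < 0 → x j l = 0 := by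
    intro j l hjl hel
    by_contra hx0
    have hgt : 0 < x j l := lt_of_le_of_ne (hbox j l).1 (Ne.symm hx0)
    set δ : ℝ := max ((e j + e l)/2) (- x j l) with hδ
    have hδneg : δ < 0 := max_lt (div_neg_of_neg_of_pos hel two_pos) (neg_lt_zero.mpr hgt)
    obtain ⟨y, hy1, hy2, hy3, hy4⟩ := move_calc n d x hsym hdiag hbox j l hjl δ
      (by have : -x j l ≤ δ := le_max_right _ _; linarith)
      (by have := (hbox j l).2; linarith)
    have hle : (∑ k : Fin n, (d k - ∑ a ∈ Finset.univ.erase k, x a k)^2)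
        ≤ (∑ k : Fin n, (d k - ∑ a ∈ Finset.univ.erase k, y a k)^2) :=
      hmin y ⟨hy1, hy2, hy3⟩
    rw [hy4] at hle
    have hS : e j + e l < 0 := hel
    have hd2 : (e j + e l)/2 ≤ δ := le_max_left _ _
    simp only [he, hrs] at hS hd2
    nlinarith [hle, hδneg, hd2, hS]
  -- all deficiencies vanish
  have hzero : ∀ k, e k = 0 := by
    by_contra hcon
    push_neg at hcon
    obtain ⟨k₁, hk₁⟩ := hcon
    obtain ⟨k₀, _, hk₀max⟩ := Finset.exists_max_image Finset.univ e ⟨k₁, Finset.mem_univ k₁⟩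
    set m : ℝ := e k₀ with hm
    have hmax : ∀ k, e k ≤ m := fun k => hk₀max k (Finset.mem_univ k)
    rcases le_or_gt m 0 with hm0 | hm0
    · -- some e k < 0: contradiction
      have hk₁neg : e k₁ < 0 := lt_of_le_of_ne (le_trans (hmax k₁) hm0) hk₁
      have hrs0 : rs k₁ = 0 := by
        apply Finset.sum_eq_zero
        intro j hj
        have hjk : j ≠ k₁ := (Finset.mem_erase.mp hj).1
        exact stat0 j k₁ hjk (by have := hmax j; linarith)
      have : e k₁ = d k₁ := by simp [he, hrs0]
      have := hpos (k₁ : ℕ) k₁.isLt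
      linarith
    · -- m > 0 : contradiction with strict EG
      set A : Finset (Fin n) := Finset.univ.filter (fun l => e l = m) with hA
      have hk₀A : k₀ ∈ A := by simp [hA, hm]
      have hcardpos : 0 < A.card := Finset.card_pos.mpr ⟨k₀, hk₀A⟩
      set Kc : ℝ := (A.card : ℝ) with hKc'
      have hKc1 : 1 ≤ Kc := by rw [hKc']; exact_mod_cast hcardpos
      have hmemA : ∀ l, l ∈ A ↔ e l = m := by intro l; simp [hA]
      -- x = 1 inside A
      have hA1 : ∀ a ∈ A, ∀ b ∈ A, a ≠ b → x a b = 1 := by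
        intro a ha b hb hab
        apply stat1 a b hab
        rw [(hmemA a).mp ha, (hmemA b).mp hb]
        linarith
      -- σ lower bound outside A
      have hσ : ∀ a, a ∉ A → min Kc (d a) ≤ ∑ l ∈ A, x a l := by
        intro a ha
        by_cases hall : ∀ l ∈ A, x a l = 1
        · have : ∑ l ∈ A, x a l = Kc := by
            rw [Finset.sum_congr rfl hall, Finset.sum_const, nsmul_eq_mul, mul_one]
          rw [this]
          exact min_le_left _ _
        · push_neg at hall
          obtain ⟨l₀, hl₀A, hl₀⟩ := hall
          have hal₀ : a ≠ l₀ := by rintro rfl; exact ha hl₀A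
          have hxlt : x a l₀ < 1 := lt_of_le_of_ne (hbox a l₀).2 hl₀
          have hea : e a ≤ -m := by
            by_contra hcon2
            push_neg at hcon2
            have : 0 < e a + e l₀ := by rw [(hmemA l₀).mp hl₀A]; linarith
            exact absurd (stat1 a l₀ hal₀ this) (ne_of_lt hxlt)
          have hzero' : ∀ j ∈ Finset.univ.erase a, j ∉ A → x j a = 0 := by
            intro j hj hjA
            have hja : j ≠ a := (Finset.mem_erase.mp hj).1
            apply stat0 j a hja
            have hjm : e j < m := lt_of_le_of_ne (hmax j) (fun h => hjA ((hmemA j).mpr h))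
            linarith
          have hsub : A ⊆ Finset.univ.erase a := by
            intro l hl
            exact Finset.mem_erase.mpr ⟨fun h => ha (h ▸ hl), Finset.mem_univ l⟩
          have hrseq : ∑ l ∈ A, x l a = rs a := by
            apply Finset.sum_subset hsub
            intro j hj hjA
            exact hzero' j hj hjA
          have hsymsum : ∑ l ∈ A, x a l = rs a := by
            rw [← hrseq]
            exact Finset.sum_congr rfl fun l _ => hsym a l
          rw [hsymsum]
          have : rs a = d a - e a := by simp [he]
          rw [this]
          have := min_le_right Kc (d a)
          linarith
      -- the sum identity over A
      have hsplit : ∀ l ∈ A, rs l = (Kc - 1) + ∑ a ∈ Finset.univ \ A, x a l := by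
        intro l hl
        have hsub : A.erase l ⊆ Finset.univ.erase l :=
          Finset.erase_subset_erase l (Finset.subset_univ A)
        have hdiff : (Finset.univ.erase l) \ (A.erase l) = Finset.univ \ A := by
          ext b
          simp only [Finset.mem_sdiff, Finset.mem_erase, Finset.mem_univ, and_true, true_and]
          constructor
          · rintro ⟨hbl, hb⟩ hbA
            exact hb ⟨hbl, hbA⟩
          · intro hbA
            refine ⟨fun h => hbA ?_, fun h => hbA h.2⟩
            rw [h]; exact hl
        have := Finset.sum_sdiff (f := fun a => x a l) hsub
        rw [hdiff] at this
        have hones : ∑ a ∈ A.erase l, x a l = (Kc - 1) := by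
          rw [Finset.sum_congr rfl (fun a ha => hA1 a (Finset.mem_of_mem_erase ha) l hl
            (Finset.mem_erase.mp ha).1), Finset.sum_const, nsmul_eq_mul, mul_one,
            Finset.card_erase_of_mem hl]
          rw [hKc']
          rw [Nat.cast_sub hcardpos]
          norm_num
        simp only [hrs]
        rw [← this, hones]
        ring
      have hsumA : ∑ l ∈ A, d (l : ℕ) = Kc * (Kc - 1)
          + (∑ a ∈ Finset.univ \ A, ∑ l ∈ A, x a l) + Kc * m := by
        have h1 : ∀ l ∈ A, d (l : ℕ) = rs l + e l := by intro l _; simp [he]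
        rw [Finset.sum_congr rfl h1, Finset.sum_add_distrib]
        have h2 : ∑ l ∈ A, e l = Kc * m := by
          rw [Finset.sum_congr rfl (fun l hl => (hmemA l).mp hl), Finset.sum_const,
            nsmul_eq_mul]
        have h3 : ∑ l ∈ A, rs l = Kc * (Kc - 1) + ∑ a ∈ Finset.univ \ A, ∑ l ∈ A, x a l := by
          rw [Finset.sum_congr rfl hsplit, Finset.sum_add_distrib, Finset.sum_const,
            nsmul_eq_mul]
          congr 1
          rw [Finset.sum_comm]
        rw [h2, h3]
      -- subset EG inequality
      have hEGsub : ∑ l ∈ A, (d (l : ℕ) + min Kc (d (l : ℕ)))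
          < Kc * (Kc - 1) + ∑ a : Fin n, min Kc (d (a : ℕ)) := by
        have hcn : A.card ≤ n := by
          simpa using Finset.card_le_card (Finset.subset_univ A)
        have hEGk := hEG A.card hcardpos hcn
        have hglue : ∑ i ∈ Finset.range A.card, min Kc (d i)
            + ∑ i ∈ Finset.Ico A.card n, min Kc (d i) = ∑ i ∈ Finset.range n, min Kc (d i) := by
          rw [Finset.range_eq_Ico, Finset.range_eq_Ico]
          exact Finset.sum_Ico_consecutive _ (Nat.zero_le _) hcn
        have himg : ∑ l ∈ A, (d (l : ℕ) + min Kc (d (l : ℕ)))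
            ≤ ∑ i ∈ Finset.range A.card, (d i + min Kc (d i)) := by
          have := sum_antitone_le n A.card hcn (fun i => d i + min Kc (d i))
            (fun i j hij hjn => add_le_add (hmono i j hij hjn)
              (min_le_min le_rfl (hmono i j hij hjn)))
            (A.image (fun l : Fin n => (l : ℕ)))
            (fun i hi => by
              obtain ⟨l, _, rfl⟩ := Finset.mem_image.mp hi
              exact Finset.mem_range.mpr l.isLt)
            (by rw [Finset.card_image_of_injective _ Fin.val_injective])
          rwa [Finset.sum_image (fun a _ b _ h => Fin.val_injective h)] at this
        have huniv : ∑ a : Fin n, min Kc (d (a : ℕ)) = ∑ i ∈ Finset.range n, min Kc (d i) :=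
          Fin.sum_univ_eq_sum_range (fun i => min Kc (d i)) n
        rw [huniv]
        calc ∑ l ∈ A, (d (l : ℕ) + min Kc (d (l : ℕ)))
            ≤ ∑ i ∈ Finset.range A.card, (d i + min Kc (d i)) := himg
          _ = ∑ i ∈ Finset.range A.card, d i + ∑ i ∈ Finset.range A.card, min Kc (d i) := by
              rw [Finset.sum_add_distrib]
          _ < Kc * (Kc - 1) + ∑ i ∈ Finset.Ico A.card n, min Kc (d i)
              + ∑ i ∈ Finset.range A.card, min Kc (d i) := by
              exact add_lt_add_left hEGk _
          _ = Kc * (Kc - 1) + ∑ i ∈ Finset.range n, min Kc (d i) := by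
              rw [add_assoc, add_comm (∑ i ∈ Finset.Ico A.card n, min Kc (d i)), hglue]
      -- combine
      have hmins : ∑ a ∈ Finset.univ \ A, min Kc (d (a : ℕ)) + ∑ l ∈ A, min Kc (d (l : ℕ))
          = ∑ a : Fin n, min Kc (d (a : ℕ)) := Finset.sum_sdiff (Finset.subset_univ A)
      have hσsum : ∑ a ∈ Finset.univ \ A, min Kc (d (a : ℕ))
          ≤ ∑ a ∈ Finset.univ \ A, ∑ l ∈ A, x a l := by
        apply Finset.sum_le_sum
        intro a ha
        exact hσ a (Finset.mem_sdiff.mp ha).2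
      have hKm : 0 < Kc * m := mul_pos (by linarith) hm0
      have hsplitsum : ∑ l ∈ A, (d (l : ℕ) + min Kc (d (l : ℕ)))
          = ∑ l ∈ A, d (l : ℕ) + ∑ l ∈ A, min Kc (d (l : ℕ)) := Finset.sum_add_distrib
      linarith [hsumA, hEGsub, hmins, hσsum, hsplitsum]
  refine ⟨x, hsym, hdiag, hbox, ?_⟩
  intro k
  have := hzero k
  simp only [he, hrs] at this
  linarith

/-- a nonincreasing sequence of positive reals satisfying the
strict Erdős–Gallai inequalities admits a symmetric fractional adjacency
matrix with zero diagonal, entries strictly between 0 and 1, and row sums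
`d₁, …, d_n`; i.e. the polytope `𝒫(D)` has an interior point. -/
theorem stmt13 (n : ℕ) (d : ℕ → ℝ)
    (hpos : ∀ i < n, 0 < d i)
    (hmono : ∀ i j, i ≤ j → j < n → d j ≤ d i)
    (hEG : ∀ k, 1 ≤ k → k ≤ n →
      ∑ i ∈ Finset.range k, d i < (k : ℝ) * ((k : ℝ) - 1)
        + ∑ i ∈ Finset.Ico k n, min (k : ℝ) (d i)) :
    ∃ x : Fin n → Fin n → ℝ,
      (∀ j k, x j k = x k j) ∧ (∀ j, x j j = 0) ∧
      (∀ j k, j ≠ k → 0 < x j k ∧ x j k < 1) ∧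
      (∀ k : Fin n, ∑ j ∈ Finset.univ.erase k, x j k = d (k : ℕ)) := by
  classical
  rcases Nat.eq_zero_or_pos n with hn | hn
  · subst hn
    exact ⟨fun _ _ => 0, fun j => j.elim0, fun j => j.elim0, fun j => j.elim0, fun j => j.elim0⟩
  have hn1 : (1:ℝ) ≤ (n:ℝ) := by exact_mod_cast hn
  set a : ℝ := (n:ℝ) - 1 with ha
  have ha0 : 0 ≤ a := by rw [ha]; linarith
  obtain ⟨ε, hεpos, hε4, haε, hεgap⟩ : ∃ ε : ℝ, 0 < ε ∧ ε ≤ 4⁻¹ ∧ (∀ i < n, a * ε ≤ d i) ∧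
      ∀ k, 1 ≤ k → k ≤ n → ε * (5*(n:ℝ)^2 + 1)
        ≤ ((k:ℝ) * ((k:ℝ) - 1) + ∑ i ∈ Finset.Ico k n, min (k:ℝ) (d i))
          - ∑ i ∈ Finset.range k, d i := by
    set gap : ℕ → ℝ := fun k => ((k:ℝ) * ((k:ℝ) - 1)
        + ∑ i ∈ Finset.Ico k n, min (k:ℝ) (d i)) - ∑ i ∈ Finset.range k, d i with hgapdef
    have hgap : ∀ k ∈ Finset.Icc 1 n, 0 < gap k := by
      intro k hk
      rw [Finset.mem_Icc] at hk
      exact sub_pos.mpr (hEG k hk.1 hk.2)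
    have hne : (Finset.Icc 1 n).Nonempty := ⟨1, Finset.mem_Icc.mpr ⟨le_refl 1, hn⟩⟩
    set G := (Finset.Icc 1 n).inf' hne gap with hG
    have hGpos : 0 < G := (Finset.lt_inf'_iff hne).mpr hgap
    have hGle : ∀ k, 1 ≤ k → k ≤ n → G ≤ gap k :=
      fun k h1 h2 => Finset.inf'_le _ (Finset.mem_Icc.mpr ⟨h1, h2⟩)
    have hdn : 0 < d (n-1) := hpos _ (by omega)
    set C : ℝ := 5*(n:ℝ)^2 + 1 with hC
    have hCpos : 0 < C := by rw [hC]; positivity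
    refine ⟨min (min (4⁻¹) (d (n-1) / n)) (G / C),
      lt_min (lt_min (by norm_num) (div_pos hdn (by linarith))) (div_pos hGpos hCpos),
      le_trans (min_le_left _ _) (min_le_left _ _), ?_, ?_⟩
    · intro i hi
      set ε := min (min (4⁻¹) (d (n-1) / n)) (G / C) with hε
      have hεpos : 0 < ε :=
        lt_min (lt_min (by norm_num) (div_pos hdn (by linarith))) (div_pos hGpos hCpos)
      have hεd : ε ≤ d (n-1) / n := le_trans (min_le_left _ _) (min_le_right _ _)
      have h1 : a * ε ≤ (n:ℝ) * ε :=
        mul_le_mul_of_nonneg_right (by rw [ha]; linarith) hεpos.le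
      have h2 : (n:ℝ) * ε ≤ d (n-1) := by
        have h := mul_le_mul_of_nonneg_left hεd (show (0:ℝ) ≤ n by linarith)
        rwa [mul_div_cancel₀ _ (by linarith : (n:ℝ) ≠ 0)] at h
      have h3 : d (n-1) ≤ d i := hmono i (n-1) (by omega) (by omega)
      linarith
    · intro k hk1 hkn
      set ε := min (min (4⁻¹) (d (n-1) / n)) (G / C) with hε
      have hεG : ε ≤ G / C := min_le_right _ _
      have hεC : ε * C ≤ G := (le_div_iff₀ hCpos).mp hεG
      have h2 : G ≤ (k:ℝ) * ((k:ℝ) - 1) + ∑ i ∈ Finset.Ico k n, min (k:ℝ) (d i)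
          - ∑ i ∈ Finset.range k, d i := hGle k hk1 hkn
      linarith
  have hc : (0:ℝ) < 1 - 2*ε := by
    have : (4:ℝ)⁻¹ < 2⁻¹ := by norm_num
    linarith
  set c : ℝ := 1 - 2*ε with hcdef
  set d' : ℕ → ℝ := fun i => (d i - a*ε)/c with hd'
  have hcd' : ∀ i, c * d' i = d i - a*ε := by
    intro i
    rw [hd', mul_comm, div_mul_cancel₀ _ (ne_of_gt hc)]
  have hpos' : ∀ i < n, 0 ≤ d' i := by
    intro i hi
    rw [hd']
    exact div_nonneg (by linarith [haε i hi]) hc.le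
  have hmono' : ∀ i j, i ≤ j → j < n → d' j ≤ d' i := by
    intro i j hij hjn
    rw [hd']
    have := hmono i j hij hjn
    exact div_le_div_of_nonneg_right (by linarith) hc.le
  have hEG' : ∀ k, 1 ≤ k → k ≤ n →
      ∑ i ∈ Finset.range k, d' i < (k : ℝ) * ((k : ℝ) - 1)
        + ∑ i ∈ Finset.Ico k n, min (k : ℝ) (d' i) := by
    intro k hk1 hkn
    rw [← mul_lt_mul_iff_right₀ hc]
    have hL : c * ∑ i ∈ Finset.range k, d' i = ∑ i ∈ Finset.range k, (d i - a*ε) := by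
      rw [Finset.mul_sum]
      exact Finset.sum_congr rfl fun i _ => hcd' i
    have hR : c * ((k:ℝ) * ((k:ℝ) - 1) + ∑ i ∈ Finset.Ico k n, min (k:ℝ) (d' i))
        = c * ((k:ℝ) * ((k:ℝ) - 1))
          + ∑ i ∈ Finset.Ico k n, min (c*(k:ℝ)) (d i - a*ε) := by
      rw [mul_add, Finset.mul_sum]
      congr 1
      refine Finset.sum_congr rfl fun i _ => ?_
      rw [mul_min_of_nonneg _ _ hc.le, hcd' i]
    rw [hL, hR]
    -- now a plain real inequality
    have hkn' : (k:ℝ) ≤ n := by exact_mod_cast hkn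
    have hk1' : (1:ℝ) ≤ (k:ℝ) := by exact_mod_cast hk1
    have hLsum : ∑ i ∈ Finset.range k, (d i - a*ε)
        = ∑ i ∈ Finset.range k, d i - (k:ℝ)*(a*ε) := by
      rw [Finset.sum_sub_distrib, Finset.sum_const, Finset.card_range, nsmul_eq_mul]
    have hmineach : ∀ i ∈ Finset.Ico k n,
        min (k:ℝ) (d i) - (2*(k:ℝ) + a)*ε ≤ min (c*(k:ℝ)) (d i - a*ε) := by
      intro i hi
      apply le_min
      · have h1 := min_le_left (k:ℝ) (d i)
        have h2 : 0 ≤ a * ε := mul_nonneg ha0 hεpos.le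
        have h3 : 0 ≤ (k:ℝ)*ε := mul_nonneg (by linarith) hεpos.le
        rw [hcdef]
        nlinarith
      · have h1 := min_le_right (k:ℝ) (d i)
        have h3 : 0 ≤ (k:ℝ)*ε := mul_nonneg (by linarith) hεpos.le
        nlinarith
    have hsummin : ∑ i ∈ Finset.Ico k n, min (k:ℝ) (d i)
        - ((Finset.Ico k n).card : ℝ) * ((2*(k:ℝ) + a)*ε)
        ≤ ∑ i ∈ Finset.Ico k n, min (c*(k:ℝ)) (d i - a*ε) := by
      have h := Finset.sum_le_sum hmineach
      rwa [Finset.sum_sub_distrib, Finset.sum_const, nsmul_eq_mul] at h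
    have hcard : ((Finset.Ico k n).card : ℝ) ≤ (n:ℝ) := by
      rw [Nat.card_Ico]
      exact_mod_cast Nat.sub_le n k
    have hcard0 : (0:ℝ) ≤ ((Finset.Ico k n).card : ℝ) := Nat.cast_nonneg _
    have h2ka : 2*(k:ℝ) + a ≤ 3*(n:ℝ) := by rw [ha]; linarith
    have h2ka0 : 0 ≤ 2*(k:ℝ) + a := by linarith
    have hB : ((Finset.Ico k n).card : ℝ) * ((2*(k:ℝ) + a)*ε) ≤ 3*(n:ℝ)^2*ε := by
      have := mul_le_mul hcard h2ka h2ka0 (by linarith : (0:ℝ) ≤ (n:ℝ))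
      nlinarith [hεpos.le]
    have hA : 2*ε*((k:ℝ)*((k:ℝ)-1)) ≤ 2*(n:ℝ)^2*ε := by
      have hk2 : (k:ℝ)*(k:ℝ) ≤ (n:ℝ)*(n:ℝ) := mul_self_le_mul_self (by linarith) hkn'
      nlinarith [hk2, hεpos.le, hk1']
    have hRc : c*((k:ℝ)*((k:ℝ)-1)) = (k:ℝ)*((k:ℝ)-1) - 2*ε*((k:ℝ)*((k:ℝ)-1)) := by
      rw [hcdef]; ring
    have hgapk := hεgap k hk1 hkn
    have hka0 : 0 ≤ (k:ℝ)*(a*ε) := mul_nonneg (by linarith) (mul_nonneg ha0 hεpos.le)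
    rw [hLsum]
    linarith [hsummin, hB, hA, hRc, hgapk, hka0, hεpos]
  obtain ⟨y, hysym, hydiag, hybox, hyrs⟩ := lemA n d' hpos' hmono' hEG'
  refine ⟨fun j k => if j = k then 0 else c * y j k + ε, ?_, ?_, ?_, ?_⟩
  · intro j k
    by_cases h : j = k
    · subst h; simp
    · simp only [if_neg h, if_neg (Ne.symm h), hysym j k]
  · intro j; simp
  · intro j k hjk
    simp only [if_neg hjk]
    have h0 := (hybox j k).1
    have h1 := (hybox j k).2
    constructor
    · nlinarith [mul_nonneg hc.le h0]
    · nlinarith [hc, mul_le_mul_of_nonneg_left h1 hc.le]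
  · intro k
    have hcongr : ∀ j ∈ Finset.univ.erase k,
        (if j = k then 0 else c * y j k + ε) = c * y j k + ε := by
      intro j hj
      rw [if_neg (Finset.mem_erase.mp hj).1]
    rw [Finset.sum_congr rfl hcongr, Finset.sum_add_distrib, Finset.sum_const,
      ← Finset.mul_sum, hyrs k, nsmul_eq_mul, Finset.card_erase_of_mem (Finset.mem_univ k),
      Finset.card_univ, Fintype.card_fin]
    have hcast : ((n - 1 : ℕ) : ℝ) = a := by
      rw [ha, Nat.cast_sub hn, Nat.cast_one]
    rw [hcast, hcd' (k : ℕ)]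
    ring
end

section
/- Fix reals $0<\alpha<\beta<1$ with $(\alpha+\beta)^2<4\alpha$, and let $D=(d_1,\dots,d_n)$ be a sequence with $d_1\ge\cdots\ge d_n$ and $\alpha<d_i/(n-1)<\beta$ for all $i$. If $n>\max\{\beta/(\alpha(1-\beta)),\,4(\beta-\alpha)/(4\alpha-(\alpha+\beta)^2)\}+1$, then the strict Erdős–Gallai inequalities $\sum_{i=1}^k d_i < k(k-1)+\sum_{i=k+1}^n\min\{k,d_i\}$ hold for all $k=1,\dots,n$. -/
open Finset

set_option maxHeartbeats 1000000

/-- if `0 < α < β < 1`, `(α+β)² < 4α`, the sequence `d` is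
nonincreasing with `α < dᵢ/(n-1) < β`, and
`n > max{β/(α(1-β)), 4(β-α)/(4α-(α+β)²)} + 1`, then the strict Erdős–Gallai
inequalities hold. -/
theorem stmt14 (α β : ℝ) (hα : 0 < α) (hαβ : α < β) (hβ : β < 1)
    (hsq : (α + β)^2 < 4 * α) (n : ℕ) (d : ℕ → ℝ)
    (hmono : ∀ i j, i ≤ j → j < n → d j ≤ d i)
    (hrange : ∀ i < n, α < d i / ((n : ℝ) - 1) ∧ d i / ((n : ℝ) - 1) < β)
    (hn : (n : ℝ) > max (β / (α * (1 - β))) (4 * (β - α) / (4 * α - (α + β)^2)) + 1) :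
    ∀ k, 1 ≤ k → k ≤ n →
      ∑ i ∈ Finset.range k, d i < (k : ℝ) * ((k : ℝ) - 1)
        + ∑ i ∈ Finset.Ico k n, min (k : ℝ) (d i) := by
  intro k hk1 hkn
  have hβ1 : 0 < 1 - β := by linarith
  have hden1 : 0 < α * (1 - β) := by positivity
  have hden2 : 0 < 4 * α - (α + β) ^ 2 := by linarith
  set N : ℝ := (n : ℝ) - 1 with hNdef
  have hX : β / (α * (1 - β)) < N := by
    have h1 := le_max_left (β / (α * (1 - β))) (4 * (β - α) / (4 * α - (α + β) ^ 2))
    have : β / (α * (1 - β)) + 1 < (n : ℝ) := by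
      calc β / (α * (1 - β)) + 1 ≤ _ + 1 := by linarith
        _ < (n : ℝ) := hn
    simp only [hNdef]; linarith
  have hY : 4 * (β - α) / (4 * α - (α + β) ^ 2) < N := by
    have h1 := le_max_right (β / (α * (1 - β))) (4 * (β - α) / (4 * α - (α + β) ^ 2))
    have : 4 * (β - α) / (4 * α - (α + β) ^ 2) + 1 < (n : ℝ) := by
      calc 4 * (β - α) / (4 * α - (α + β) ^ 2) + 1 ≤ _ + 1 := by linarith
        _ < (n : ℝ) := hn
    simp only [hNdef]; linarith
  have hA1 : β < α * (1 - β) * N := by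
    have := (div_lt_iff₀ hden1).mp hX
    linarith
  have hA2 : 4 * (β - α) < (4 * α - (α + β) ^ 2) * N := by
    have := (div_lt_iff₀ hden2).mp hY
    linarith
  have hNpos : 0 < N := by
    have : 0 < β / (α * (1 - β)) := div_pos (by linarith) hden1
    linarith
  have hd : ∀ i, i < n → α * N < d i ∧ d i < β * N := by
    intro i hi
    obtain ⟨h1, h2⟩ := hrange i hi
    constructor
    · have := (lt_div_iff₀ hNpos).mp h1
      linarith
    · have := (div_lt_iff₀ hNpos).mp h2
      linarith
  have hk0 : (1 : ℝ) ≤ (k : ℝ) := by exact_mod_cast hk1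
  have hkNr : (k : ℝ) ≤ N + 1 := by
    have : (k : ℝ) ≤ (n : ℝ) := by exact_mod_cast hkn
    linarith
  have hLHS : ∑ i ∈ Finset.range k, d i < (k : ℝ) * (β * N) := by
    calc ∑ i ∈ Finset.range k, d i < ∑ _i ∈ Finset.range k, β * N := by
          apply Finset.sum_lt_sum_of_nonempty
          · exact Finset.nonempty_range_iff.mpr (by omega)
          · intro i hi
            have hi' : i < n := by
              have := Finset.mem_range.mp hi; omega
            exact (hd i hi').2
      _ = (k : ℝ) * (β * N) := by
          rw [Finset.sum_const, Finset.card_range, nsmul_eq_mul]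
  have hcard : ((Finset.Ico k n).card : ℝ) = (n : ℝ) - (k : ℝ) := by
    rw [Nat.card_Ico, Nat.cast_sub hkn]
  rcases le_or_gt (k : ℝ) (α * N) with hcase | hcase
  · -- Case 1 : k ≤ αN, all mins equal k
    have hmin : ∀ i ∈ Finset.Ico k n, min ((k : ℝ)) (d i) = (k : ℝ) := by
      intro i hi
      have hi' : i < n := (Finset.mem_Ico.mp hi).2
      exact min_eq_left (le_of_lt (lt_of_le_of_lt hcase (hd i hi').1))
    rw [Finset.sum_congr rfl hmin, Finset.sum_const, nsmul_eq_mul, hcard]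
    have hnN : (n : ℝ) = N + 1 := by simp [hNdef]
    rw [hnN]
    have hh : (k : ℝ) * (β * N) < (k : ℝ) * N := by
      have hb : β * N < N := by nlinarith
      exact mul_lt_mul_of_pos_left hb (by linarith)
    linarith only [hLHS, hh]
  · -- Case 2 : k > αN
    have hRHS : ((n : ℝ) - (k : ℝ)) * (α * N) ≤ ∑ i ∈ Finset.Ico k n, min ((k : ℝ)) (d i) := by
      calc ((n : ℝ) - (k : ℝ)) * (α * N) = ∑ _i ∈ Finset.Ico k n, α * N := by
            rw [Finset.sum_const, nsmul_eq_mul, hcard]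
        _ ≤ ∑ i ∈ Finset.Ico k n, min ((k : ℝ)) (d i) := by
            apply Finset.sum_le_sum
            intro i hi
            have hi' : i < n := (Finset.mem_Ico.mp hi).2
            exact le_min (le_of_lt hcase) (le_of_lt (hd i hi').1)
    have hnN : (n : ℝ) = N + 1 := by simp [hNdef]
    have key : (k : ℝ) * (β * N) ≤ (k : ℝ) * ((k : ℝ) - 1) + ((N : ℝ) + 1 - (k : ℝ)) * (α * N) := by
      rcases le_or_gt (k : ℝ) (β * N) with hc1 | hc1
      · -- αN < k ≤ βN : use the quadratic discriminant condition
        have h2 : 4 * (β - α) * N < (4 * α - (α + β) ^ 2) * N * N := by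
          nlinarith [hA2, hNpos]
        nlinarith only [sq_nonneg (2 * (k : ℝ) - (α + β) * N), h2, hc1, hNpos, hα, hk0]
      · rcases le_or_gt (β * N + 1) (k : ℝ) with hc2 | hc2
        · -- k ≥ βN + 1 : both terms of the factorization are nonneg
          have t1 : 0 ≤ (k : ℝ) * ((k : ℝ) - 1 - β * N) := by nlinarith
          have t2 : 0 ≤ α * N * (N + 1 - (k : ℝ)) := by nlinarith
          nlinarith only [t1, t2, hα, hNpos, hk0, hkNr, hc1, hc2]
        · rcases le_or_gt 1 (β * N) with hc3 | hc3
          · -- βN < k < βN + 1 and βN ≥ 1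
            have t1 : 0 ≤ ((k : ℝ) - β * N) * ((k : ℝ) - β * N) := by nlinarith
            have t2 : 0 ≤ ((k : ℝ) - β * N) * (β * N - 1) := by nlinarith
            have t3 : 0 ≤ α * N * (β * N + 1 - (k : ℝ)) := by nlinarith
            have t4 : 0 < α * (1 - β) * N * N - β * N := by nlinarith [hA1, hNpos]
            nlinarith only [t1, t2, t3, t4, hk0, hkNr]
          · -- βN < 1 forces k = 1
            have hk2 : (k : ℝ) < 2 := by linarith
            have hkeq : k = 1 := by
              have : k < 2 := by exact_mod_cast hk2
              omega
            subst hkeq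
            have hαβN : β < α * N := by nlinarith [hA1, mul_pos hα (mul_pos (mul_pos (show (0:ℝ) < β by linarith) hNpos) hNpos)]
            simp only [Nat.cast_one]
            nlinarith [mul_pos hNpos hNpos, hαβN]
    calc ∑ i ∈ Finset.range k, d i < (k : ℝ) * (β * N) := hLHS
      _ ≤ (k : ℝ) * ((k : ℝ) - 1) + ((N : ℝ) + 1 - (k : ℝ)) * (α * N) := key
      _ ≤ (k : ℝ) * ((k : ℝ) - 1) + ∑ i ∈ Finset.Ico k n, min ((k : ℝ)) (d i) := by
          rw [hnN] at hRHS
          linarith only [hRHS]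
end

section
/- Let $n\ge 3$ and for unordered pairs $\{j,k\}$, $1\le j\ne k\le n$, let $\zeta_{\{j,k\}}\in(0,1)$. Define $q(t)=\tfrac12\sum_{\{j,k\}}(\zeta_{\{j,k\}}-\zeta_{\{j,k\}}^2)(\tau_j+\tau_k)^2$. Then $q$ is a positive definite quadratic form on $\mathbb{R}^n$, and $\int_{\mathbb{R}^n} e^{-q(t)}\,dt \ge (4\pi/n)^{n/2}$. -/
open Finset MeasureTheory Real


lemma pair_sum_id17 (n : ℕ) (t : Fin n → ℝ) :
    ∑ j, ∑ k ∈ Finset.univ.filter (fun k => j < k), (t j + t k)^2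
      = ((n : ℝ) - 2) * (∑ j, (t j)^2) + (∑ j, t j)^2 := by
  have split : ∀ j k : Fin n, (t j + t k)^2 =
      (if j < k then (t j + t k)^2 else 0) + (if j = k then (t j + t k)^2 else 0)
        + (if k < j then (t j + t k)^2 else 0) := by
    intro j k
    rcases lt_trichotomy j k with h | h | h
    · simp [h, h.ne, h.not_gt]
    · simp [h, lt_irrefl]
    · simp [h, h.ne', h.not_gt]
  have inner : ∀ j, ∑ k, (t j + t k)^2
      = (n:ℝ) * t j^2 + 2 * t j * (∑ k, t k) + ∑ k, (t k)^2 := by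
    intro j
    have e : ∀ k, (t j + t k)^2 = t j^2 + 2 * t j * t k + t k^2 := fun k => by ring
    simp_rw [e, Finset.sum_add_distrib, Finset.sum_const, Finset.card_univ,
      Fintype.card_fin, nsmul_eq_mul, ← Finset.mul_sum]
  have full : ∑ j : Fin n, ∑ k : Fin n, (t j + t k)^2
      = 2 * ((n:ℝ) * ∑ j, (t j)^2) + 2 * (∑ j, t j)^2 := by
    simp_rw [inner, Finset.sum_add_distrib, Finset.sum_const, Finset.card_univ,
      Fintype.card_fin, nsmul_eq_mul]
    rw [← Finset.mul_sum, ← Finset.sum_mul]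
    have h2 : (∑ x : Fin n, 2 * t x) = 2 * ∑ x : Fin n, t x := (Finset.mul_sum _ _ _).symm
    rw [h2]; ring
  have swap : ∑ j : Fin n, ∑ k : Fin n, (if k < j then (t j + t k)^2 else 0)
      = ∑ j : Fin n, ∑ k : Fin n, (if j < k then (t j + t k)^2 else 0) := by
    rw [Finset.sum_comm]
    congr 1; funext j; congr 1; funext k
    by_cases h : j < k <;> simp [h, add_comm (t k) (t j)]
  have diag2 : ∑ j : Fin n, ∑ k : Fin n, (if j = k then (t j + t k)^2 else 0)
      = 4 * ∑ j, (t j)^2 := by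
    simp_rw [Finset.sum_ite_eq, if_pos (Finset.mem_univ _), Finset.mul_sum]
    congr 1; funext j; ring
  have filt : ∑ j, ∑ k ∈ Finset.univ.filter (fun k => j < k), (t j + t k)^2
      = ∑ j : Fin n, ∑ k : Fin n, (if j < k then (t j + t k)^2 else 0) := by
    congr 1; funext j; rw [Finset.sum_filter]
  have key : ∑ j : Fin n, ∑ k : Fin n, (t j + t k)^2
      = 2 * (∑ j : Fin n, ∑ k : Fin n, (if j < k then (t j + t k)^2 else 0))
        + 4 * ∑ j, (t j)^2 := by
    calc ∑ j : Fin n, ∑ k : Fin n, (t j + t k)^2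
        = ∑ j : Fin n, ∑ k : Fin n, ((if j < k then (t j + t k)^2 else 0)
            + (if j = k then (t j + t k)^2 else 0) + (if k < j then (t j + t k)^2 else 0)) := by
          simp_rw [← split]
      _ = _ := by
          simp_rw [Finset.sum_add_distrib]
          rw [swap, diag2]; ring
  rw [filt]
  nlinarith [key, full]

/-- for `n ≥ 3` and `ζ_{jk} ∈ (0,1)`, the quadratic form
`q(t) = (1/2) ∑_{j<k} (ζ_{jk} - ζ_{jk}²)(τⱼ+τₖ)²` is positive definite and
`∫_{ℝⁿ} e^{-q(t)} dt ≥ (4π/n)^{n/2}`. -/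
theorem stmt17 (n : ℕ) (hn : 3 ≤ n) (ζ : Fin n → Fin n → ℝ)
    (hζ : ∀ j k, j ≠ k → 0 < ζ j k ∧ ζ j k < 1)
    (q : (Fin n → ℝ) → ℝ)
    (hq : ∀ t, q t = (1/2 : ℝ) * ∑ j, ∑ k ∈ Finset.univ.filter (fun k => j < k),
      (ζ j k - (ζ j k)^2) * (t j + t k)^2) :
    (∀ t : Fin n → ℝ, t ≠ 0 → 0 < q t) ∧
    (4 * π / (n : ℝ)) ^ ((n : ℝ) / 2) ≤ ∫ t : Fin n → ℝ, Real.exp (-(q t)) := by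
  have hn3 : (3:ℝ) ≤ (n:ℝ) := by exact_mod_cast hn
  set P : Finset (Fin n × Fin n) := Finset.univ.filter (fun p => p.1 < p.2) with hP
  have hPne : P.Nonempty := by
    refine ⟨(⟨0, by omega⟩, ⟨1, by omega⟩), Finset.mem_filter.mpr ⟨Finset.mem_univ _, ?_⟩⟩
    simp [Fin.lt_def]
  set c : ℝ := P.inf' hPne (fun p => ζ p.1 p.2 - ζ p.1 p.2 ^ 2) with hc
  have hcpos : 0 < c := by
    rw [hc, Finset.lt_inf'_iff]
    intro p hp
    have hlt : p.1 < p.2 := (Finset.mem_filter.mp hp).2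
    obtain ⟨h0, h1⟩ := hζ p.1 p.2 hlt.ne
    nlinarith
  set d : ℝ := c * ((n:ℝ) - 2) / 2 with hd
  have hdpos : 0 < d := by
    rw [hd]; nlinarith
  -- upper bound q t ≤ (n/4) * B
  have hub : ∀ t : Fin n → ℝ, q t ≤ ((n:ℝ)/4) * ∑ j, (t j)^2 := by
    intro t
    rw [hq]
    have step : ∑ j, ∑ k ∈ Finset.univ.filter (fun k => j < k),
        (ζ j k - (ζ j k)^2) * (t j + t k)^2
        ≤ ∑ j, ∑ k ∈ Finset.univ.filter (fun k => j < k), (1/4 : ℝ) * (t j + t k)^2 := by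
      refine Finset.sum_le_sum fun j _ => Finset.sum_le_sum fun k hk => ?_
      have hjk : j < k := (Finset.mem_filter.mp hk).2
      obtain ⟨h0, h1⟩ := hζ j k hjk.ne
      nlinarith [sq_nonneg (t j + t k), sq_nonneg (2 * ζ j k - 1)]
    have hS : ∑ j, ∑ k ∈ Finset.univ.filter (fun k => j < k), (1/4 : ℝ) * (t j + t k)^2
        = (1/4) * (((n:ℝ) - 2) * (∑ j, (t j)^2) + (∑ j, t j)^2) := by
      rw [← pair_sum_id17, Finset.mul_sum]
      exact Finset.sum_congr rfl fun j _ => (Finset.mul_sum _ _ _).symm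
    have hCS : (∑ j, t j)^2 ≤ (n:ℝ) * ∑ j, (t j)^2 := by
      have := sq_sum_le_card_mul_sum_sq (s := (Finset.univ : Finset (Fin n))) (f := t)
      simpa using this
    have hBnn : (0:ℝ) ≤ ∑ j, (t j)^2 := by positivity
    nlinarith [step, hS, hBnn, hCS]
  -- lower bound d * B ≤ q t
  have hlb : ∀ t : Fin n → ℝ, d * ∑ j, (t j)^2 ≤ q t := by
    intro t
    rw [hq]
    have step : ∑ j, ∑ k ∈ Finset.univ.filter (fun k => j < k), c * (t j + t k)^2
        ≤ ∑ j, ∑ k ∈ Finset.univ.filter (fun k => j < k),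
          (ζ j k - (ζ j k)^2) * (t j + t k)^2 := by
      refine Finset.sum_le_sum fun j _ => Finset.sum_le_sum fun k hk => ?_
      have hjk : j < k := (Finset.mem_filter.mp hk).2
      have hmem : (j, k) ∈ P := Finset.mem_filter.mpr ⟨Finset.mem_univ _, hjk⟩
      have hcle : c ≤ ζ j k - (ζ j k)^2 := Finset.inf'_le _ hmem
      nlinarith [sq_nonneg (t j + t k)]
    have hS : ∑ j, ∑ k ∈ Finset.univ.filter (fun k => j < k), c * (t j + t k)^2
        = c * (((n:ℝ) - 2) * (∑ j, (t j)^2) + (∑ j, t j)^2) := by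
      rw [← pair_sum_id17, Finset.mul_sum]
      exact Finset.sum_congr rfl fun j _ => (Finset.mul_sum _ _ _).symm
    have hA : (0:ℝ) ≤ (∑ j, t j)^2 := sq_nonneg _
    calc d * ∑ j, (t j)^2
        = (1/2) * (c * (((n:ℝ) - 2) * (∑ j, (t j)^2))) := by rw [hd]; ring
      _ ≤ (1/2) * (c * (((n:ℝ) - 2) * (∑ j, (t j)^2) + (∑ j, t j)^2)) := by
          nlinarith [mul_nonneg hcpos.le hA]
      _ = (1/2) * ∑ j, ∑ k ∈ Finset.univ.filter (fun k => j < k), c * (t j + t k)^2 := by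
          rw [hS]
      _ ≤ _ := by linarith [step]
  -- positivity
  have hpos : ∀ t : Fin n → ℝ, t ≠ 0 → 0 < q t := by
    intro t ht
    obtain ⟨i, hi⟩ := Function.ne_iff.mp ht
    have hB : 0 < ∑ j, (t j)^2 := by
      refine Finset.sum_pos' (fun j _ => sq_nonneg _) ⟨i, Finset.mem_univ _, ?_⟩
      exact pow_two_pos_of_ne_zero hi
    calc (0:ℝ) < d * ∑ j, (t j)^2 := by positivity
      _ ≤ q t := hlb t
  refine ⟨hpos, ?_⟩
  -- continuity / measurability of q
  have hqc : Continuous q := by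
    have : q = fun t => (1/2 : ℝ) * ∑ j, ∑ k ∈ Finset.univ.filter (fun k => j < k),
        (ζ j k - (ζ j k)^2) * (t j + t k)^2 := funext hq
    rw [this]
    refine continuous_const.mul (continuous_finset_sum _ fun j _ =>
      continuous_finset_sum _ fun k _ => continuous_const.mul ?_)
    exact ((continuous_apply j).add (continuous_apply k)).pow 2
  have hprod : ∀ (a : ℝ) (t : Fin n → ℝ),
      ∏ i, Real.exp (-a * (t i)^2) = Real.exp (-(a * ∑ j, (t j)^2)) := by
    intro a t
    rw [← Real.exp_sum]
    congr 1
    rw [Finset.mul_sum, ← Finset.sum_neg_distrib]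
    exact Finset.sum_congr rfl fun j _ => by ring
  have hintd : Integrable (fun t : Fin n → ℝ => Real.exp (-(d * ∑ j, (t j)^2))) := by
    have h1 : Integrable (fun t : Fin n → ℝ => ∏ i, Real.exp (-d * (t i)^2)) :=
      Integrable.fintype_prod (f := fun _ x => Real.exp (-d * x^2))
        (fun _ => integrable_exp_neg_mul_sq hdpos)
    simpa only [hprod d] using h1
  have hgint : Integrable (fun t : Fin n → ℝ => Real.exp (-(q t))) := by
    refine hintd.mono (hqc.neg.rexp.aestronglyMeasurable) ?_
    filter_upwards with t
    rw [Real.norm_eq_abs, Real.abs_exp, Real.norm_eq_abs, Real.abs_exp]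
    exact Real.exp_le_exp.mpr (neg_le_neg (hlb t))
  have hn4 : (0:ℝ) < (n:ℝ)/4 := by linarith
  have hintn : Integrable (fun t : Fin n → ℝ => Real.exp (-((n:ℝ)/4 * ∑ j, (t j)^2))) := by
    have h1 : Integrable (fun t : Fin n → ℝ => ∏ i, Real.exp (-((n:ℝ)/4) * (t i)^2)) :=
      Integrable.fintype_prod (f := fun _ x => Real.exp (-((n:ℝ)/4) * x^2))
        (fun _ => integrable_exp_neg_mul_sq hn4)
    simpa only [hprod ((n:ℝ)/4)] using h1
  have hmono : (∫ t : Fin n → ℝ, Real.exp (-((n:ℝ)/4 * ∑ j, (t j)^2)))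
      ≤ ∫ t : Fin n → ℝ, Real.exp (-(q t)) := by
    refine integral_mono hintn hgint fun t => ?_
    exact Real.exp_le_exp.mpr (neg_le_neg (hub t))
  have hcalc : (∫ t : Fin n → ℝ, Real.exp (-((n:ℝ)/4 * ∑ j, (t j)^2)))
      = Real.sqrt (π / ((n:ℝ)/4)) ^ n := by
    rw [show (fun t : Fin n → ℝ => Real.exp (-((n:ℝ)/4 * ∑ j, (t j)^2)))
        = fun t : Fin n → ℝ => ∏ i, Real.exp (-((n:ℝ)/4) * (t i)^2) from
      funext fun t => (hprod _ t).symm]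
    rw [MeasureTheory.volume_pi, MeasureTheory.integral_fintype_prod_eq_pow (ι := Fin n)
      (fun x : ℝ => Real.exp (-((n:ℝ)/4) * x^2)), integral_gaussian ((n:ℝ)/4),
      Fintype.card_fin]
  have hfinal : Real.sqrt (π / ((n:ℝ)/4)) ^ n = (4 * π / (n:ℝ)) ^ ((n:ℝ)/2) := by
    have hne : (n:ℝ) ≠ 0 := by linarith
    have h1 : π / ((n:ℝ)/4) = 4 * π / (n:ℝ) := by field_simp
    have h2 : (0:ℝ) ≤ 4 * π / (n:ℝ) := by positivity
    rw [h1, Real.sqrt_eq_rpow, ← Real.rpow_natCast ((4 * π / (n:ℝ)) ^ (1/2 : ℝ)) n,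
      ← Real.rpow_mul h2]
    rw [show (1/2 : ℝ) * (n:ℕ) = (n:ℝ)/2 by ring]
  calc (4 * π / (n : ℝ)) ^ ((n : ℝ) / 2)
      = ∫ t : Fin n → ℝ, Real.exp (-((n:ℝ)/4 * ∑ j, (t j)^2)) := by rw [hcalc, hfinal]
    _ ≤ _ := hmono
end
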